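/- arXiv:1912.01967 — 5 statements merged into one kernel-verified Lean document; each statement's English description precedes it below -/
import Mathlib

section
/- Let S ≥ 1/2 with 2S ∈ ℕ and let n, ℓ ≥ 1. For every permutation-symmetric Ψ: {1,…,ℓ}^n → ℂ it holds that E^D_{ℓ,n}(𝒫Ψ) ≤ E^T_{ℓ,n}(Ψ), where (𝒫Ψ)(X) = (∏_{x=1}^ℓ f(n_x(X))) Ψ(X), E^D_{ℓ,n}(Φ) = E_{ℓ,n}(Φ) + S ∑_{X} (n_1(X) + n_ℓ(X)) |Φ(X)|² is the Dirichlet Heisenberg energy, and E^T_{ℓ,n}(Ψ) = S ∑_{j=1}^n [ ∑_{X: x_j ≤ ℓ−1} |Ψ(X+δ_j) − Ψ(X)|² + ∑_{X: x_j = 1} |Ψ(X)|² + ∑_{X: x_j = ℓ} |Ψ(X)|² ] is the free Dirichlet (Laplacian) energy. -/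
open scoped BigOperators

noncomputable section

/-- The spin value `S = twoS / 2`. -/
def Sval (twoS : ℕ) : ℝ := twoS / 2

/-- The occupation number `n_x(X) = #{j : x_j = x}` of the site `x` in the
configuration `X` (sites are labelled `0, …, ℓ−1`). -/
def occ {n ℓ : ℕ} (X : Fin n → Fin ℓ) (x : ℕ) : ℕ :=
  (Finset.univ.filter fun j => (X j : ℕ) = x).card

/-- Permutation symmetry of an `n`-particle wave function. -/
def SymmFun {n ℓ : ℕ} (Ψ : (Fin n → Fin ℓ) → ℂ) : Prop :=
  ∀ (π : Equiv.Perm (Fin n)) (X : Fin n → Fin ℓ), Ψ (X ∘ π) = Ψ X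

/-- The square root factor `√([1 − #{k ≠ j : x_k = x}/(2S)]₊)` (note that `Real.sqrt`
of a negative number is `0`, which implements the positive part). -/
def hopCoeff (twoS : ℕ) {n ℓ : ℕ} (X : Fin n → Fin ℓ) (j : Fin n) (x : ℕ) : ℝ :=
  Real.sqrt (1 - ((Finset.univ.filter fun k => k ≠ j ∧ (X k : ℕ) = x).card : ℝ) / (twoS : ℝ))

/-- The Heisenberg energy form `E_{ℓ,n}(Ψ)` in the Holstein–Primakoff representation. -/
def Eform (twoS : ℕ) {n ℓ : ℕ} (Ψ : (Fin n → Fin ℓ) → ℂ) : ℝ :=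
  Sval twoS * ∑ j : Fin n, ∑ X : Fin n → Fin ℓ,
    if h : (X j : ℕ) + 1 < ℓ then
      ‖Ψ (Function.update X j ⟨(X j : ℕ) + 1, h⟩) * (hopCoeff twoS X j (X j : ℕ) : ℂ)
        - Ψ X * (hopCoeff twoS X j ((X j : ℕ) + 1) : ℂ)‖ ^ 2
    else 0

/-- The two-particle density `ρ(x,y) = ⟨Ψ, a†_x a†_y a_y a_x Ψ⟩`; for a permutation
symmetric normalized `Ψ` this equals `n(n−1) ∑_{x₃,…,x_n} |Ψ(x,y,x₃,…,x_n)|²`. -/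
def rho2 {n ℓ : ℕ} (Ψ : (Fin n → Fin ℓ) → ℂ) (x y : ℕ) : ℝ :=
  ∑ X : Fin n → Fin ℓ, ‖Ψ X‖ ^ 2 *
    ((Finset.univ.filter fun p : Fin n × Fin n =>
        p.1 ≠ p.2 ∧ (X p.1 : ℕ) = x ∧ (X p.2 : ℕ) = y).card : ℝ)

/-- The Holstein–Primakoff weight `f(m)`: `f(0)=1`,
`f(m) = (∏_{j=1}^m (1-(j-1)/(2S)))^{1/2}` for `1 ≤ m ≤ 2S`, and `f(m) = 0` for `m > 2S`
(the factor `i = 2S` in the product vanishes, and `Real.sqrt` of the empty product is `1`). -/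
def fHP (twoS m : ℕ) : ℝ :=
  Real.sqrt (∏ i ∈ Finset.range m, (1 - (i : ℝ) / (twoS : ℝ)))

/-- The operator `𝒫`: multiplication by `∏_x f(n_x(X))`. -/
def Pproj (twoS : ℕ) {n ℓ : ℕ} (Ψ : (Fin n → Fin ℓ) → ℂ) : (Fin n → Fin ℓ) → ℂ :=
  fun X => ((∏ x ∈ Finset.range ℓ, fHP twoS (occ X x) : ℝ) : ℂ) * Ψ X

/-- The Dirichlet Heisenberg energy `E^D_{ℓ,n}(Φ) = E_{ℓ,n}(Φ) + S ∑_X (n_1(X)+n_ℓ(X))|Φ(X)|²`. -/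
def EDform (twoS : ℕ) {n ℓ : ℕ} (Φ : (Fin n → Fin ℓ) → ℂ) : ℝ :=
  Eform twoS Φ + Sval twoS * ∑ X : Fin n → Fin ℓ,
    ((occ X 0 + occ X (ℓ - 1) : ℕ) : ℝ) * ‖Φ X‖ ^ 2

/-- The free Dirichlet (Laplacian) energy `E^T_{ℓ,n}(Ψ)`. -/
def ETform (twoS : ℕ) {n ℓ : ℕ} (Ψ : (Fin n → Fin ℓ) → ℂ) : ℝ :=
  Sval twoS * ∑ j : Fin n,
    ((∑ X : Fin n → Fin ℓ,
        if h : (X j : ℕ) + 1 < ℓ then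
          ‖Ψ (Function.update X j ⟨(X j : ℕ) + 1, h⟩) - Ψ X‖ ^ 2
        else 0)
      + (∑ X : Fin n → Fin ℓ, if (X j : ℕ) = 0 then ‖Ψ X‖ ^ 2 else 0)
      + ∑ X : Fin n → Fin ℓ, if (X j : ℕ) = ℓ - 1 then ‖Ψ X‖ ^ 2 else 0)

/- ### Auxiliary lemmas for the proof -/

lemma prodHP_nonneg (twoS : ℕ) (hS : 1 ≤ twoS) (m : ℕ) :
    0 ≤ ∏ i ∈ Finset.range m, (1 - (i : ℝ) / (twoS : ℝ)) := by
  rcases le_or_gt m twoS with hm | hm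
  · apply Finset.prod_nonneg
    intro i hi
    rw [Finset.mem_range] at hi
    have h1 : (i : ℝ) ≤ (twoS : ℝ) := by exact_mod_cast le_of_lt (lt_of_lt_of_le hi hm)
    have htS : (0:ℝ) < twoS := by exact_mod_cast hS
    rw [sub_nonneg, div_le_one htS]
    exact h1
  · have h0 : ∏ i ∈ Finset.range m, (1 - (i : ℝ) / (twoS : ℝ)) = 0 := by
      apply Finset.prod_eq_zero (Finset.mem_range.2 hm)
      have htS : (twoS:ℝ) ≠ 0 := by positivity
      field_simp
      norm_num
    rw [h0]

lemma prodHP_le_one (twoS : ℕ) (hS : 1 ≤ twoS) (m : ℕ) :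
    ∏ i ∈ Finset.range m, (1 - (i : ℝ) / (twoS : ℝ)) ≤ 1 := by
  rcases le_or_gt m twoS with hm | hm
  · apply Finset.prod_le_one
    · intro i hi
      rw [Finset.mem_range] at hi
      have h1 : (i : ℝ) ≤ (twoS : ℝ) := by exact_mod_cast le_of_lt (lt_of_lt_of_le hi hm)
      have htS : (0:ℝ) < twoS := by exact_mod_cast hS
      rw [sub_nonneg, div_le_one htS]; exact h1
    · intro i _
      have : (0:ℝ) ≤ (i : ℝ) / (twoS : ℝ) := by positivity
      linarith
  · have h0 : ∏ i ∈ Finset.range m, (1 - (i : ℝ) / (twoS : ℝ)) = 0 := by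
      apply Finset.prod_eq_zero (Finset.mem_range.2 hm)
      have htS : (twoS:ℝ) ≠ 0 := by positivity
      field_simp
      norm_num
    rw [h0]; norm_num

lemma fHP_nonneg (twoS m : ℕ) : 0 ≤ fHP twoS m := Real.sqrt_nonneg _

lemma fHP_le_one (twoS : ℕ) (hS : 1 ≤ twoS) (m : ℕ) : fHP twoS m ≤ 1 := by
  have := Real.sqrt_le_sqrt (prodHP_le_one twoS hS m)
  simpa [fHP] using this

lemma fHP_succ (twoS : ℕ) (hS : 1 ≤ twoS) (m : ℕ) :
    fHP twoS (m + 1) = fHP twoS m * Real.sqrt (1 - (m : ℝ) / (twoS : ℝ)) := by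
  rw [fHP, fHP, Finset.prod_range_succ, Real.sqrt_mul (prodHP_nonneg twoS hS m)]

/-- Occupation number of the site `x` not counting the particle `j`. -/
def occNe {n ℓ : ℕ} (X : Fin n → Fin ℓ) (j : Fin n) (x : ℕ) : ℕ :=
  (Finset.univ.filter fun k => k ≠ j ∧ (X k : ℕ) = x).card

lemma occ_eq_occNe {n ℓ : ℕ} (X : Fin n → Fin ℓ) (j : Fin n) (x : ℕ) :
    occ X x = occNe X j x + (if (X j : ℕ) = x then 1 else 0) := by
  classical
  rw [occ, occNe, Finset.card_filter, Finset.card_filter,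
    ← Finset.add_sum_erase _ _ (Finset.mem_univ j),
    ← Finset.add_sum_erase _ (fun k => if k ≠ j ∧ (X k : ℕ) = x then 1 else 0)
      (Finset.mem_univ j)]
  simp only [ne_eq, not_true_eq_false, false_and, if_false, zero_add]
  rw [add_comm]
  congr 1
  apply Finset.sum_congr rfl
  intro k hk
  have : k ≠ j := (Finset.mem_erase.1 hk).1
  simp [this]

lemma occNe_update {n ℓ : ℕ} (X : Fin n → Fin ℓ) (j : Fin n) (y : Fin ℓ) (x : ℕ) :
    occNe (Function.update X j y) j x = occNe X j x := by
  classical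
  rw [occNe, occNe]
  congr 1
  apply Finset.filter_congr
  intro k _
  by_cases hk : k = j
  · simp [hk]
  · simp [hk, Function.update_of_ne hk]

lemma hopCoeff_eq (twoS : ℕ) {n ℓ : ℕ} (X : Fin n → Fin ℓ) (j : Fin n) (x : ℕ) :
    hopCoeff twoS X j x = Real.sqrt (1 - (occNe X j x : ℝ) / (twoS : ℝ)) := rfl

lemma prod_split {ℓ xj : ℕ} (h : xj + 1 < ℓ) (g : ℕ → ℝ) :
    ∏ x ∈ Finset.range ℓ, g x =
      g xj * g (xj + 1) *
        ∏ x ∈ ((Finset.range ℓ).erase xj).erase (xj + 1), g x := by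
  have h1 : xj ∈ Finset.range ℓ := Finset.mem_range.2 (by omega)
  have h2 : xj + 1 ∈ (Finset.range ℓ).erase xj :=
    Finset.mem_erase.2 ⟨by omega, Finset.mem_range.2 h⟩
  rw [← Finset.mul_prod_erase _ _ h1, ← Finset.mul_prod_erase _ _ h2, mul_assoc]

/-- The key identity: moving one particle from `x_j` to `x_j + 1` changes the
Holstein–Primakoff weight in such a way that the two hopping coefficients match. -/
lemma coeff_eq (twoS : ℕ) (hS : 1 ≤ twoS) {n ℓ : ℕ} (X : Fin n → Fin ℓ) (j : Fin n)
    (h : (X j : ℕ) + 1 < ℓ) :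
    (∏ x ∈ Finset.range ℓ, fHP twoS (occ (Function.update X j ⟨(X j : ℕ) + 1, h⟩) x)) *
        hopCoeff twoS X j (X j : ℕ)
      = (∏ x ∈ Finset.range ℓ, fHP twoS (occ X x)) * hopCoeff twoS X j ((X j : ℕ) + 1) := by
  classical
  set xj := (X j : ℕ) with hxj
  set X' := Function.update X j (⟨xj + 1, h⟩ : Fin ℓ) with hX'
  set c := occNe X j xj with hc
  set b := occNe X j (xj + 1) with hb
  have hXxj : occ X xj = c + 1 := by
    rw [occ_eq_occNe X j xj]; simp [hc, hxj]
  have hXxj1 : occ X (xj + 1) = b := by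
    rw [occ_eq_occNe X j (xj + 1)]
    simp [hb, hxj]
  have hX'j : (X' j : ℕ) = xj + 1 := by simp [hX']
  have hX'xj : occ X' xj = c := by
    rw [occ_eq_occNe X' j xj, occNe_update, hX'j]
    simp [hc]
  have hX'xj1 : occ X' (xj + 1) = b + 1 := by
    rw [occ_eq_occNe X' j (xj + 1), occNe_update, hX'j]
    simp [hb]
  have hother : ∀ x ∈ ((Finset.range ℓ).erase xj).erase (xj + 1),
      occ X' x = occ X x := by
    intro x hx
    have h1 : x ≠ xj + 1 := (Finset.mem_erase.1 hx).1
    have h2 : x ≠ xj := (Finset.mem_erase.1 (Finset.mem_erase.1 hx).2).1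
    rw [occ_eq_occNe X' j x, occ_eq_occNe X j x, occNe_update, hX'j]
    rw [← hxj]; simp [Ne.symm h1, Ne.symm h2]
  rw [prod_split h (fun x => fHP twoS (occ X' x)), prod_split h (fun x => fHP twoS (occ X x))]
  rw [Finset.prod_congr rfl (fun x hx => by rw [hother x hx] :
    ∀ x ∈ ((Finset.range ℓ).erase xj).erase (xj + 1),
      fHP twoS (occ X' x) = fHP twoS (occ X x))]
  rw [hX'xj, hX'xj1, hXxj, hXxj1]
  rw [hopCoeff_eq, hopCoeff_eq, ← hc, ← hb]
  rw [fHP_succ twoS hS c, fHP_succ twoS hS b]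
  ring

/-- The pointwise bound for each hopping term. -/
lemma key_bound (twoS : ℕ) (hS : 1 ≤ twoS) {n ℓ : ℕ} (Ψ : (Fin n → Fin ℓ) → ℂ)
    (X : Fin n → Fin ℓ) (j : Fin n) (h : (X j : ℕ) + 1 < ℓ) :
    ‖Pproj twoS Ψ (Function.update X j ⟨(X j : ℕ) + 1, h⟩) * (hopCoeff twoS X j (X j : ℕ) : ℂ)
        - Pproj twoS Ψ X * (hopCoeff twoS X j ((X j : ℕ) + 1) : ℂ)‖ ^ 2
      ≤ ‖Ψ (Function.update X j ⟨(X j : ℕ) + 1, h⟩) - Ψ X‖ ^ 2 := by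
  classical
  set X' := Function.update X j (⟨(X j : ℕ) + 1, h⟩ : Fin ℓ) with hX'
  set G : ℝ := (∏ x ∈ Finset.range ℓ, fHP twoS (occ X x)) * hopCoeff twoS X j ((X j : ℕ) + 1)
    with hG
  have hGeq : (∏ x ∈ Finset.range ℓ, fHP twoS (occ X' x)) * hopCoeff twoS X j (X j : ℕ) = G :=
    coeff_eq twoS hS X j h
  have hrw : Pproj twoS Ψ X' * (hopCoeff twoS X j (X j : ℕ) : ℂ)
      - Pproj twoS Ψ X * (hopCoeff twoS X j ((X j : ℕ) + 1) : ℂ)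
      = (G : ℂ) * (Ψ X' - Ψ X) := by
    have e1 : (((∏ x ∈ Finset.range ℓ, fHP twoS (occ X' x)) : ℝ) : ℂ) * Ψ X'
        * (hopCoeff twoS X j (X j : ℕ) : ℂ) = (G : ℂ) * Ψ X' := by
      rw [← hGeq, Complex.ofReal_mul]; ring
    have e2 : (((∏ x ∈ Finset.range ℓ, fHP twoS (occ X x)) : ℝ) : ℂ) * Ψ X
        * (hopCoeff twoS X j ((X j : ℕ) + 1) : ℂ) = (G : ℂ) * Ψ X := by
      rw [hG, Complex.ofReal_mul]; ring
    rw [Pproj, Pproj]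
    rw [e1, e2]
    ring
  rw [hrw]
  have hGnn : 0 ≤ G := by
    apply mul_nonneg
    · exact Finset.prod_nonneg fun x _ => fHP_nonneg twoS _
    · exact Real.sqrt_nonneg _
  have hG1 : G ≤ 1 := by
    apply mul_le_one₀
    · exact Finset.prod_le_one (fun x _ => fHP_nonneg twoS _) (fun x _ => fHP_le_one twoS hS _)
    · exact Real.sqrt_nonneg _
    · rw [hopCoeff_eq]
      have h1 : (1 : ℝ) - (occNe X j ((X j:ℕ)+1) : ℝ) / (twoS : ℝ) ≤ 1 := by
        have : (0:ℝ) ≤ (occNe X j ((X j:ℕ)+1) : ℝ) / (twoS : ℝ) := by positivity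
        linarith
      calc Real.sqrt _ ≤ Real.sqrt 1 := Real.sqrt_le_sqrt h1
        _ = 1 := Real.sqrt_one
  rw [norm_mul, mul_pow]
  have h1 : ‖(G : ℂ)‖ ^ 2 ≤ 1 := by
    rw [Complex.norm_real, Real.norm_of_nonneg hGnn]
    nlinarith
  nlinarith [sq_nonneg ‖Ψ X' - Ψ X‖, norm_nonneg (Ψ X' - Ψ X)]

lemma occ_mul_eq {n ℓ : ℕ} (X : Fin n → Fin ℓ) (x : ℕ) (c : ℝ) :
    ((occ X x : ℕ) : ℝ) * c = ∑ j : Fin n, if (X j : ℕ) = x then c else 0 := by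
  rw [occ, ← Finset.sum_boole, Finset.sum_mul]
  simp [ite_mul]

lemma boundary_eq {n ℓ : ℕ} (Ψ : (Fin n → Fin ℓ) → ℂ) :
    ∑ X : Fin n → Fin ℓ, ((occ X 0 + occ X (ℓ - 1) : ℕ) : ℝ) * ‖Ψ X‖ ^ 2
      = ∑ j : Fin n,
        ((∑ X : Fin n → Fin ℓ, if (X j : ℕ) = 0 then ‖Ψ X‖ ^ 2 else 0)
          + ∑ X : Fin n → Fin ℓ, if (X j : ℕ) = ℓ - 1 then ‖Ψ X‖ ^ 2 else 0) := by
  calc ∑ X : Fin n → Fin ℓ, ((occ X 0 + occ X (ℓ - 1) : ℕ) : ℝ) * ‖Ψ X‖ ^ 2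
      = ∑ X : Fin n → Fin ℓ, ∑ j : Fin n,
          ((if (X j : ℕ) = 0 then ‖Ψ X‖ ^ 2 else 0)
            + if (X j : ℕ) = ℓ - 1 then ‖Ψ X‖ ^ 2 else 0) := by
        apply Finset.sum_congr rfl
        intro X _
        rw [Nat.cast_add, add_mul, occ_mul_eq, occ_mul_eq, ← Finset.sum_add_distrib]
    _ = ∑ j : Fin n, ∑ X : Fin n → Fin ℓ,
          ((if (X j : ℕ) = 0 then ‖Ψ X‖ ^ 2 else 0)
            + if (X j : ℕ) = ℓ - 1 then ‖Ψ X‖ ^ 2 else 0) := Finset.sum_comm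
    _ = _ := by
        apply Finset.sum_congr rfl
        intro j _
        rw [Finset.sum_add_distrib]

lemma Pproj_norm_le (twoS : ℕ) (hS : 1 ≤ twoS) {n ℓ : ℕ} (Ψ : (Fin n → Fin ℓ) → ℂ)
    (X : Fin n → Fin ℓ) : ‖Pproj twoS Ψ X‖ ≤ ‖Ψ X‖ := by
  rw [Pproj, norm_mul, Complex.norm_real,
    Real.norm_of_nonneg (Finset.prod_nonneg fun x _ => fHP_nonneg twoS _)]
  exact mul_le_of_le_one_left (norm_nonneg _)
    (Finset.prod_le_one (fun x _ => fHP_nonneg twoS _) (fun x _ => fHP_le_one twoS hS _))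

/-- `E^D_{ℓ,n}(𝒫Ψ) ≤ E^T_{ℓ,n}(Ψ)` for permutation-symmetric `Ψ`. -/
theorem dirichlet_energy_projection_bound (twoS : ℕ) (hS : 1 ≤ twoS)
    {n ℓ : ℕ} (hn : 1 ≤ n) (hℓ : 1 ≤ ℓ)
    (Ψ : (Fin n → Fin ℓ) → ℂ) (hΨ : SymmFun Ψ) :
    EDform twoS (Pproj twoS Ψ) ≤ ETform twoS Ψ := by
  classical
  have hSv : 0 ≤ Sval twoS := by rw [Sval]; positivity
  rw [EDform, ETform]
  have split : (∑ j : Fin n,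
      ((∑ X : Fin n → Fin ℓ, if h : (X j : ℕ) + 1 < ℓ then
          ‖Ψ (Function.update X j ⟨(X j : ℕ) + 1, h⟩) - Ψ X‖ ^ 2 else 0)
        + (∑ X : Fin n → Fin ℓ, if (X j : ℕ) = 0 then ‖Ψ X‖ ^ 2 else 0)
        + ∑ X : Fin n → Fin ℓ, if (X j : ℕ) = ℓ - 1 then ‖Ψ X‖ ^ 2 else 0))
    = (∑ j : Fin n, ∑ X : Fin n → Fin ℓ, if h : (X j : ℕ) + 1 < ℓ then
          ‖Ψ (Function.update X j ⟨(X j : ℕ) + 1, h⟩) - Ψ X‖ ^ 2 else 0)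
      + ∑ j : Fin n,
        ((∑ X : Fin n → Fin ℓ, if (X j : ℕ) = 0 then ‖Ψ X‖ ^ 2 else 0)
          + ∑ X : Fin n → Fin ℓ, if (X j : ℕ) = ℓ - 1 then ‖Ψ X‖ ^ 2 else 0) := by
    rw [← Finset.sum_add_distrib]
    apply Finset.sum_congr rfl
    intro j _
    ring
  rw [split, mul_add]
  apply add_le_add
  · rw [Eform]
    apply mul_le_mul_of_nonneg_left _ hSv
    apply Finset.sum_le_sum
    intro j _
    apply Finset.sum_le_sum
    intro X _
    by_cases h : (X j : ℕ) + 1 < ℓ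
    · simp only [dif_pos h]
      exact key_bound twoS hS Ψ X j h
    · simp [h]
  · apply mul_le_mul_of_nonneg_left _ hSv
    rw [← boundary_eq Ψ]
    apply Finset.sum_le_sum
    intro X _
    apply mul_le_mul_of_nonneg_left _ (by positivity : (0:ℝ) ≤ ((occ X 0 + occ X (ℓ - 1) : ℕ) : ℝ))
    have h1 := Pproj_norm_le twoS hS Ψ X
    nlinarith [norm_nonneg (Pproj twoS Ψ X)]

end
end

section
/- Let S ≥ 1/2 with 2S ∈ ℕ and n, ℓ ≥ 1. For every permutation-symmetric Ψ: {1,…,ℓ}^n → ℂ, the Heisenberg energy form satisfies E_{ℓ,n}(Ψ) ≥ (S/2) ∑_{X,Y ∈ 𝒳_{ℓ,n}, |X−Y|₁ = 1} |Ψ(X) − Ψ(Y)|², where 𝒳_{ℓ,n} = { X ∈ {1,…,ℓ}^n : x_i ≠ x_j for all i ≠ j } and |X−Y|₁ = ∑_{i=1}^n |x_i − y_i|. -/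
open scoped BigOperators

noncomputable section

/-! If both `X` and `X + δ_j` have pairwise distinct coordinates, both square-root factors in
the corresponding term of `E_{ℓ,n}` equal `1`, so that term is `S ‖Ψ(X) − Ψ(X + δ_j)‖²`; all
other terms are nonnegative. Two such configurations are at `ℓ¹`-distance one exactly when one
is a hop `X ↦ X + δ_j` of the other, so the ordered double sum counts every hop twice, which
the factor `1/2` absorbs. -/

section DoubleSum

variable {α M : Type*} [Fintype α] [AddCommMonoid M]

theorem Fintype.sum_sum_ite_or_swap (R : α → α → Prop) [DecidableRel R]
    (hR : ∀ x y, R x y → ¬ R y x) (g : α → α → M) (hg : ∀ x y, g x y = g y x) :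
    ∑ x, ∑ y, (if R x y ∨ R y x then g x y else 0) =
      2 • ∑ x, ∑ y, if R x y then g x y else 0 := by
  have hsplit : ∀ x y, (if R x y ∨ R y x then g x y else 0) =
      (if R x y then g x y else 0) + if R y x then g y x else 0 := by
    intro x y
    by_cases hxy : R x y
    · simp [hxy, hR x y hxy]
    · by_cases hyx : R y x <;> simp [hxy, hyx, hg x y]
  simp only [hsplit, Finset.sum_add_distrib, two_nsmul]
  rw [Finset.sum_comm (f := fun x y => if R y x then g y x else 0)]

theorem Fintype.ite_exists_eq_sum_ite {ι : Type*} [Fintype ι] {P : ι → Prop} [DecidablePred P]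
    [Decidable (∃ i, P i)] (hP : ∀ i j, P i → P j → i = j) (a : M) :
    (if ∃ i, P i then a else 0) = ∑ i, if P i then a else 0 := by
  split_ifs with h
  · obtain ⟨i, hi⟩ := h
    rw [Finset.sum_eq_single i (fun j _ hj => if_neg fun hPj => hj (hP j i hPj hi))
      (by simp), if_pos hi]
  · exact (Finset.sum_eq_zero fun i _ => if_neg (not_exists.mp h i)).symm

end DoubleSum

theorem Fintype.sum_eq_one_iff {ι : Type*} [Fintype ι] (f : ι → ℕ) :
    ∑ i, f i = 1 ↔ ∃ j, f j = 1 ∧ ∀ i ≠ j, f i = 0 := by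
  classical
  constructor
  · intro hsum
    obtain ⟨j, -, hj⟩ := Finset.exists_ne_zero_of_sum_ne_zero (s := Finset.univ) (f := f)
      (by omega)
    have hsplit := Finset.add_sum_erase Finset.univ f (Finset.mem_univ j)
    have hrest : ∑ i ∈ Finset.univ.erase j, f i = 0 := by omega
    refine ⟨j, by omega, fun i hi => ?_⟩
    exact Finset.sum_eq_zero_iff.mp hrest i (Finset.mem_erase.mpr ⟨hi, Finset.mem_univ i⟩)
  · rintro ⟨j, hj, hrest⟩
    rw [Finset.sum_eq_single j (fun i _ hi => hrest i hi) (by simp), hj]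

/-- `y = x + δ_j`. -/
def IsHop {ι : Type*} (x y : ι → ℕ) (j : ι) : Prop :=
  y j = x j + 1 ∧ ∀ i ≠ j, y i = x i

instance {ι : Type*} [Fintype ι] [DecidableEq ι] (x y : ι → ℕ) (j : ι) :
    Decidable (IsHop x y j) :=
  inferInstanceAs (Decidable (_ ∧ _))

namespace IsHop

variable {ι : Type*} {x y : ι → ℕ} {j k : ι}

theorem not_swap (h : IsHop x y j) : ¬ IsHop y x k := fun h' => by
  rcases eq_or_ne j k with rfl | hjk
  · have := h.1; have := h'.1; omega
  · have := h.1; have := h'.2 j hjk; omega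

theorem unique (h : IsHop x y j) (h' : IsHop x y k) : j = k := by
  by_contra hjk
  have := h'.1; have := h.2 k (Ne.symm hjk); omega

end IsHop

theorem sum_natAbs_sub_eq_one_iff {ι : Type*} [Fintype ι] (x y : ι → ℕ) :
    ∑ i, ((x i : ℤ) - y i).natAbs = 1 ↔ ∃ j, IsHop x y j ∨ IsHop y x j := by
  rw [Fintype.sum_eq_one_iff]
  refine exists_congr fun j => ?_
  simp only [IsHop]
  constructor
  · rintro ⟨hj, hrest⟩
    have hrest' : ∀ i ≠ j, y i = x i := fun i hi => by have := hrest i hi; omega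
    rcases (by omega : y j = x j + 1 ∨ x j = y j + 1) with hup | hdown
    · exact Or.inl ⟨hup, hrest'⟩
    · exact Or.inr ⟨hdown, fun i hi => (hrest' i hi).symm⟩
  · rintro (⟨hj, hrest⟩ | ⟨hj, hrest⟩)
    · exact ⟨by omega, fun i hi => by rw [hrest i hi]; simp⟩
    · exact ⟨by omega, fun i hi => by rw [hrest i hi]; simp⟩

section FinConfigurations

variable {n ℓ : ℕ}

theorem isHop_iff_eq_update {X Y : Fin n → Fin ℓ} {j : Fin n} (h : (X j : ℕ) + 1 < ℓ) :
    IsHop (fun i => (X i : ℕ)) (fun i => (Y i : ℕ)) j ↔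
      Y = Function.update X j ⟨(X j : ℕ) + 1, h⟩ := by
  constructor
  · rintro ⟨hj, hrest⟩
    funext i
    rcases eq_or_ne i j with rfl | hi
    · exact Fin.ext (by simpa using hj)
    · exact Fin.ext (by simpa [hi] using hrest i hi)
  · rintro rfl
    exact ⟨by simp, fun i hi => by simp [hi]⟩

theorem not_isHop_of_top {X Y : Fin n → Fin ℓ} {j : Fin n} (h : ¬ (X j : ℕ) + 1 < ℓ) :
    ¬ IsHop (fun i => (X i : ℕ)) (fun i => (Y i : ℕ)) j := fun hop => by
  have hYj : (Y j : ℕ) = X j + 1 := hop.1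
  have := (Y j).isLt
  omega

theorem hopCoeff_eq_one (twoS : ℕ) {X : Fin n → Fin ℓ} {j : Fin n} {x : ℕ}
    (hx : ∀ k ≠ j, (X k : ℕ) ≠ x) : hopCoeff twoS X j x = 1 := by
  have hempty : (Finset.univ.filter fun k => k ≠ j ∧ (X k : ℕ) = x) = ∅ :=
    Finset.filter_eq_empty_iff.mpr fun k _ hk => hx k hk.1 hk.2
  simp [hopCoeff, hempty]

def HardcoreHop (X Y : Fin n → Fin ℓ) (j : Fin n) : Prop :=
  Function.Injective X ∧ Function.Injective Y ∧
    IsHop (fun i => (X i : ℕ)) (fun i => (Y i : ℕ)) j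

instance (X Y : Fin n → Fin ℓ) (j : Fin n) : Decidable (HardcoreHop X Y j) :=
  inferInstanceAs (Decidable (_ ∧ _))

theorem HardcoreHop.not_swap {X Y : Fin n → Fin ℓ} {j k : Fin n} (h : HardcoreHop X Y j) :
    ¬ HardcoreHop Y X k := fun h' => h.2.2.not_swap h'.2.2

theorem HardcoreHop.unique {X Y : Fin n → Fin ℓ} {j k : Fin n} (h : HardcoreHop X Y j)
    (h' : HardcoreHop X Y k) : j = k :=
  h.2.2.unique h'.2.2

theorem injective_and_sum_natAbs_sub_eq_one_iff (X Y : Fin n → Fin ℓ) :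
    (Function.Injective X ∧ Function.Injective Y ∧
        (∑ i : Fin n, (((X i : ℕ) : ℤ) - ((Y i : ℕ) : ℤ)).natAbs) = 1) ↔
      (∃ j, HardcoreHop X Y j) ∨ ∃ j, HardcoreHop Y X j := by
  rw [sum_natAbs_sub_eq_one_iff]
  constructor
  · rintro ⟨hX, hY, j, hXY | hYX⟩
    exacts [Or.inl ⟨j, hX, hY, hXY⟩, Or.inr ⟨j, hY, hX, hYX⟩]
  · rintro (⟨j, hX, hY, hXY⟩ | ⟨j, hY, hX, hYX⟩)
    exacts [⟨hX, hY, j, .inl hXY⟩, ⟨hX, hY, j, .inr hYX⟩]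

theorem sum_hardcoreHop_le_energy_term (twoS : ℕ) (Ψ : (Fin n → Fin ℓ) → ℂ)
    (j : Fin n) (X : Fin n → Fin ℓ) :
    ∑ Y : Fin n → Fin ℓ,
        (if HardcoreHop X Y j then ‖Ψ X - Ψ Y‖ ^ 2 else 0) ≤
      if h : (X j : ℕ) + 1 < ℓ then
        ‖Ψ (Function.update X j ⟨(X j : ℕ) + 1, h⟩) * (hopCoeff twoS X j (X j : ℕ) : ℂ)
          - Ψ X * (hopCoeff twoS X j ((X j : ℕ) + 1) : ℂ)‖ ^ 2
      else 0 := by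
  split_ifs with h
  · set Y₀ := Function.update X j ⟨(X j : ℕ) + 1, h⟩
    simp only [HardcoreHop, isHop_iff_eq_update h]
    rw [Finset.sum_eq_single Y₀ (fun Y _ hY => if_neg fun hc => hY hc.2.2) (by simp)]
    split_ifs with hinj
    · obtain ⟨hX, hY₀, -⟩ := hinj
      have hlow : hopCoeff twoS X j (X j : ℕ) = 1 :=
        hopCoeff_eq_one twoS fun k hk hkj => hk (hX (Fin.ext hkj))
      have hup : hopCoeff twoS X j ((X j : ℕ) + 1) = 1 :=
        hopCoeff_eq_one twoS fun k hk hkj => hk (hY₀ (Fin.ext (by simp [Y₀, hk, hkj])))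
      simp [hlow, hup, norm_sub_rev]
    · positivity
  · simp [HardcoreHop, not_isHop_of_top h]

end FinConfigurations

theorem energy_form_hardcore_lower_bound_general (twoS : ℕ)
    {n ℓ : ℕ}
    (Ψ : (Fin n → Fin ℓ) → ℂ) :
    Sval twoS / 2 * ∑ X : Fin n → Fin ℓ, ∑ Y : Fin n → Fin ℓ,
        (if Function.Injective X ∧ Function.Injective Y ∧
            (∑ i : Fin n, (((X i : ℕ) : ℤ) - ((Y i : ℕ) : ℤ)).natAbs) = 1
          then ‖Ψ X - Ψ Y‖ ^ 2 else 0) ≤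
      Eform twoS Ψ := by
  calc _ = Sval twoS / 2 * ∑ X, ∑ Y,
        (if (∃ j, HardcoreHop X Y j) ∨ ∃ j, HardcoreHop Y X j then ‖Ψ X - Ψ Y‖ ^ 2 else 0) := by
          simp only [injective_and_sum_natAbs_sub_eq_one_iff]
    _ = Sval twoS * ∑ j, ∑ X, ∑ Y, (if HardcoreHop X Y j then ‖Ψ X - Ψ Y‖ ^ 2 else 0) := by
          rw [Fintype.sum_sum_ite_or_swap (fun X Y => ∃ j, HardcoreHop X Y j)
            (fun _ _ ⟨_, h⟩ ⟨_, h'⟩ => h.not_swap h') _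
            fun X Y => by rw [norm_sub_rev]]
          simp only [Fintype.ite_exists_eq_sum_ite (fun _ _ => HardcoreHop.unique),
            Finset.sum_comm (γ := Fin n)]
          ring
    _ ≤ Eform twoS Ψ :=
          mul_le_mul_of_nonneg_left
            (Finset.sum_le_sum fun j _ => Finset.sum_le_sum fun X _ =>
              sum_hardcoreHop_le_energy_term twoS Ψ j X)
            (by unfold Sval; positivity)

/-- Lower bound of the Heisenberg energy form by the hard-core
hopping energy on configurations with pairwise distinct coordinates. -/
theorem energy_form_hardcore_lower_bound (twoS : ℕ) (hS : 1 ≤ twoS)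
    {n ℓ : ℕ} (hn : 1 ≤ n) (hℓ : 1 ≤ ℓ)
    (Ψ : (Fin n → Fin ℓ) → ℂ) (hΨ : SymmFun Ψ) :
    Sval twoS / 2 * ∑ X : Fin n → Fin ℓ, ∑ Y : Fin n → Fin ℓ,
        (if Function.Injective X ∧ Function.Injective Y ∧
            (∑ i : Fin n, (((X i : ℕ) : ℤ) - ((Y i : ℕ) : ℤ)).natAbs) = 1
          then ‖Ψ X - Ψ Y‖ ^ 2 else 0) ≤
      Eform twoS Ψ :=
  energy_form_hardcore_lower_bound_general twoS Ψ

end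
end

section
/- Let S ≥ 1/2 with 2S ∈ ℕ and 1 ≤ n ≤ ℓ. For every permutation-symmetric Ψ: {1,…,ℓ}^n → ℂ, E_{ℓ,n}(Ψ) ≥ (S/2) ∑_{A,B ∈ {1,…,ℓ−n+1}^n, |A−B|₁ = 1} |Φ(A) − Φ(B)|², where Φ: {1,…,ℓ−n+1}^n → ℂ is the permutation-symmetric function determined by Φ(V(X)) = Ψ(X) for all X ∈ 𝒳_{ℓ,n}. (The right-hand side is S times the quadratic form of the graph Laplacian with free boundary conditions on the box {1,…,ℓ−n+1}^n applied to Φ.) -/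
open scoped BigOperators

noncomputable section

/-!
Given a box point `A` and a direction `i` with `A + δᵢ` still in the box, put particle `k` on the
site `A k + r k`, where `r k` is the rank of `k` when the particles are ordered by `A k` with ties
broken so that `i` comes last. The resulting configuration `X` is injective with `V X = A`, and no
other particle sits on `X i` or `X i + 1`. Hence both hopping coefficients of the `(i, X)` term of
`E` equal `1`, and `X + δᵢ` is injective with `V (X + δᵢ) = A + δᵢ`, so that term is
`|Φ (A + δᵢ) - Φ A|²`. Distinct `(i, A)` give distinct `(i, X)`, and every edge of the box occurs
twice in the double sum over ordered pairs, which accounts for the factor `1/2`.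
-/

namespace ChainConfig

open Finset Function

section Rank

variable {ι α β : Type*} [Fintype ι]

def rank [LT α] [DecidableRel ((· < ·) : α → α → Prop)] (X : ι → α) (k : ι) : ℕ :=
  (univ.filter fun j => X j < X k).card

lemma rank_congr [LT α] [DecidableRel ((· < ·) : α → α → Prop)]
    [LT β] [DecidableRel ((· < ·) : β → β → Prop)] {X : ι → α} {Y : ι → β} {k : ι}
    (h : ∀ j, X j < X k ↔ Y j < Y k) : rank X k = rank Y k := by
  unfold rank
  congr 1
  exact filter_congr fun j _ => h j

variable [Preorder α] [DecidableRel ((· < ·) : α → α → Prop)]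

lemma rank_lt_rank {X : ι → α} {j k : ι} (h : X j < X k) : rank X j < rank X k :=
  card_lt_card <| (ssubset_iff_of_subset fun x hx => by
      simp only [mem_filter, mem_univ, true_and] at hx ⊢
      exact hx.trans h).2
    ⟨j, by simpa using h, by simp⟩

lemma rank_lt_card (X : ι → α) (k : ι) : rank X k < Fintype.card ι :=
  card_lt_card <| (ssubset_iff_of_subset (subset_univ _)).2 ⟨k, mem_univ k, by simp⟩

end Rank

section Site

variable {ι : Type*} [LinearOrder ι] (A : ι → ℕ) (i : ι)

/-- Particles ordered by `A k`, ties broken by index except that `i` comes last. -/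
def key (k : ι) : ℕ ×ₗ Bool ×ₗ ι := toLex (A k, toLex (decide (k = i), k))

lemma key_injective : Injective (key A i) := fun j k h => by
  simpa [key] using congrArg (fun x => (ofLex (ofLex x).2).2) h

variable {A i}

lemma le_of_key_lt {j k : ι} (h : key A i j < key A i k) : A j ≤ A k := by
  rcases Prod.Lex.toLex_lt_toLex.1 h with h | ⟨h, -⟩
  exacts [h.le, h.le]

lemma lt_of_key_self_lt {k : ι} (h : key A i i < key A i k) : A i < A k := by
  rcases Prod.Lex.toLex_lt_toLex.1 h with h | ⟨h, h'⟩
  · exact h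
  · rcases Prod.Lex.toLex_lt_toLex.1 h' with h' | ⟨h', h''⟩
    · exact absurd h' (by simp)
    · simp only [decide_true, eq_comm (a := true), decide_eq_true_eq] at h'
      simp [h'] at h''

variable (A i) [Fintype ι]

def site (k : ι) : ℕ := A k + rank (key A i) k

variable {A i}

lemma site_lt_site {j k : ι} (h : key A i j < key A i k) : site A i j < site A i k :=
  Nat.add_lt_add_of_le_of_lt (le_of_key_lt h) (rank_lt_rank h)

lemma site_lt_site_iff {j k : ι} : site A i j < site A i k ↔ key A i j < key A i k := by
  refine ⟨fun h => ?_, site_lt_site⟩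
  rcases lt_trichotomy (key A i j) (key A i k) with hjk | hjk | hjk
  · exact hjk
  · cases key_injective A i hjk
    exact absurd h (lt_irrefl _)
  · exact absurd (site_lt_site hjk) h.not_gt

lemma site_injective : Injective (site A i) := fun j k h =>
  key_injective A i <| by
    rcases lt_trichotomy (key A i j) (key A i k) with hjk | hjk | hjk
    · exact absurd h (site_lt_site hjk).ne
    · exact hjk
    · exact absurd h (site_lt_site hjk).ne'

lemma rank_site (k : ι) : rank (site A i) k = rank (key A i) k :=
  rank_congr fun _ => site_lt_site_iff

lemma site_ne_site_self_add_one (j : ι) : site A i j ≠ site A i i + 1 := by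
  intro h
  have hij : key A i i < key A i j := site_lt_site_iff.1 (by omega)
  have := lt_of_key_self_lt hij
  have := rank_lt_rank hij
  simp only [site] at h
  omega

lemma site_lt (k : ι) : site A i k < A k + Fintype.card ι :=
  Nat.add_lt_add_left (rank_lt_card _ k) _

end Site

section Hop

variable {ι : Type*} [DecidableEq ι] {ℓ : ℕ}

/-- The map `V` of the paper, read coordinatewise. -/
def squeeze [Fintype ι] (X : ι → Fin ℓ) (k : ι) : ℕ := X k - rank X k

variable {X : ι → Fin ℓ} {i : ι} (h : (X i : ℕ) + 1 < ℓ)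

lemma update_add_one_lt_iff (hX : Injective X) (hfree : ∀ j, (X j : ℕ) ≠ X i + 1) (j k : ι) :
    update X i ⟨X i + 1, h⟩ j < update X i ⟨X i + 1, h⟩ k ↔ X j < X k := by
  have hne : ∀ j, j ≠ i → (X j : ℕ) ≠ X i := fun j hj e => hj (hX (Fin.ext e))
  have := hfree j
  have := hfree k
  simp only [Fin.lt_def, update_apply]
  split_ifs with hj hk hk <;> subst_vars <;> simp only [lt_irrefl]
  · have := hne k hk; omega
  · have := hne j hj; omega

lemma injective_update_add_one (hX : Injective X) (hfree : ∀ j, (X j : ℕ) ≠ X i + 1) :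
    Injective (update X i ⟨X i + 1, h⟩) := by
  intro j k hjk
  by_contra hne
  rcases (hX.ne hne).lt_or_gt with hlt | hlt
  · exact ((update_add_one_lt_iff h hX hfree j k).2 hlt).ne hjk
  · exact ((update_add_one_lt_iff h hX hfree k j).2 hlt).ne' hjk

lemma rank_update_add_one [Fintype ι] (hX : Injective X) (hfree : ∀ j, (X j : ℕ) ≠ X i + 1) :
    rank (update X i ⟨X i + 1, h⟩) = rank X :=
  funext fun k => rank_congr fun j => update_add_one_lt_iff h hX hfree j k

end Hop

section Unsqueeze

variable {n ℓ : ℕ} (hnℓ : n ≤ ℓ) (A : Fin n → Fin (ℓ - n + 1)) (i : Fin n)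

def unsqueeze : Fin n → Fin ℓ := fun k =>
  ⟨site (fun k => (A k : ℕ)) i k, by
    have := site_lt (A := fun k => (A k : ℕ)) (i := i) k
    have := (A k).isLt
    simp only [Fintype.card_fin] at *
    omega⟩

lemma val_unsqueeze (k : Fin n) :
    (unsqueeze hnℓ A i k : ℕ) = A k + rank (key (fun k => (A k : ℕ)) i) k := rfl

lemma rank_unsqueeze : rank (unsqueeze hnℓ A i) = rank (key (fun k => (A k : ℕ)) i) :=
  funext fun k => (rank_congr fun _ => Fin.lt_def).trans (rank_site k)

lemma unsqueeze_injective : Injective (unsqueeze hnℓ A i) := fun _ _ h =>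
  site_injective (A := fun k => (A k : ℕ)) (i := i) (congrArg Fin.val h)

lemma squeeze_unsqueeze (k : Fin n) : squeeze (unsqueeze hnℓ A i) k = A k := by
  simp only [squeeze, rank_unsqueeze, val_unsqueeze, Nat.add_sub_cancel]

lemma unsqueeze_left_injective : Injective fun A => unsqueeze hnℓ A i := fun A B h =>
  funext fun k => Fin.ext <| by
    simpa only [squeeze_unsqueeze] using congrArg (squeeze · k) h

lemma unsqueeze_ne_unsqueeze_self_add_one (j : Fin n) :
    (unsqueeze hnℓ A i j : ℕ) ≠ unsqueeze hnℓ A i i + 1 :=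
  site_ne_site_self_add_one (A := fun k => (A k : ℕ)) j

lemma unsqueeze_self_add_one_lt (hA : (A i : ℕ) + 1 < ℓ - n + 1) :
    (unsqueeze hnℓ A i i : ℕ) + 1 < ℓ := by
  have := site_lt (A := fun k => (A k : ℕ)) (i := i) i
  simp only [Fintype.card_fin, site] at this
  rw [val_unsqueeze]
  omega

lemma squeeze_update_unsqueeze (hA : (A i : ℕ) + 1 < ℓ - n + 1) (k : Fin n) :
    squeeze (update (unsqueeze hnℓ A i) i
        ⟨unsqueeze hnℓ A i i + 1, unsqueeze_self_add_one_lt hnℓ A i hA⟩) k =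
      update A i ⟨A i + 1, hA⟩ k := by
  rw [squeeze, rank_update_add_one _ (unsqueeze_injective hnℓ A i)
    (unsqueeze_ne_unsqueeze_self_add_one hnℓ A i), rank_unsqueeze]
  rcases eq_or_ne k i with rfl | hk
  · simp only [update_self, val_unsqueeze]
    omega
  · simp only [update_of_ne hk, val_unsqueeze, Nat.add_sub_cancel]

end Unsqueeze

section Box

variable {ι : Type*} {m : ℕ}

def l1Dist [Fintype ι] (A B : ι → Fin m) : ℕ := ∑ i, (((A i : ℕ) : ℤ) - ((B i : ℕ) : ℤ)).natAbs

def IsUnitStep (i : ι) (A B : ι → Fin m) : Prop := (B i : ℕ) = A i + 1 ∧ ∀ j ≠ i, B j = A j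

variable {i j : ι} {A B : ι → Fin m}

lemma IsUnitStep.add_one_lt (h : IsUnitStep i A B) : (A i : ℕ) + 1 < m :=
  h.1 ▸ (B i).isLt

lemma isUnitStep_iff_eq_update [DecidableEq ι] (h : (A i : ℕ) + 1 < m) :
    IsUnitStep i A B ↔ B = update A i ⟨A i + 1, h⟩ := by
  refine ⟨fun hB => funext fun j => ?_, fun hB => hB ▸ ⟨by simp, fun j hj => update_of_ne hj _ _⟩⟩
  rcases eq_or_ne j i with rfl | hj
  · exact Fin.ext (by simp [hB.1])
  · rw [update_of_ne hj, hB.2 j hj]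

lemma IsUnitStep.unique (h : IsUnitStep i A B) (h' : IsUnitStep j A B) : i = j := by
  by_contra hij
  have := h'.2 i hij
  have := h.1
  simp_all

lemma IsUnitStep.not_isUnitStep_swap (h : IsUnitStep i A B) : ¬ IsUnitStep j B A := by
  intro h'
  have := h.1
  have := h'.1
  rcases eq_or_ne i j with rfl | hij
  · omega
  · have := h'.2 i hij
    simp_all

variable [Fintype ι]

lemma IsUnitStep.l1Dist_eq_one (h : IsUnitStep i A B) : l1Dist A B = 1 := by
  rw [l1Dist, Fintype.sum_eq_single i fun j hj => by simp [h.2 j hj], h.1]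
  omega

lemma IsUnitStep.l1Dist_swap_eq_one (h : IsUnitStep i B A) : l1Dist A B = 1 := by
  rw [← h.l1Dist_eq_one, l1Dist, l1Dist]
  exact Fintype.sum_congr _ _ fun j => by omega

lemma exists_isUnitStep_of_l1Dist_eq_one (h : l1Dist A B = 1) :
    ∃ i, IsUnitStep i A B ∨ IsUnitStep i B A := by
  obtain ⟨i, -, hi⟩ := exists_ne_zero_of_sum_ne_zero (h.symm ▸ one_ne_zero : l1Dist A B ≠ 0)
  have hi1 : (((A i : ℕ) : ℤ) - B i).natAbs ≤ 1 :=
    (single_le_sum (f := fun k => (((A k : ℕ) : ℤ) - B k).natAbs) (fun _ _ => Nat.zero_le _)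
      (mem_univ i)).trans h.le
  have heq : ∀ j ≠ i, A j = B j := fun j hj => Fin.ext <| by
    have := (add_le_sum (f := fun k => (((A k : ℕ) : ℤ) - B k).natAbs) (fun _ _ => Nat.zero_le _)
      (mem_univ i) (mem_univ j) hj.symm).trans h.le
    omega
  rcases (by omega : (B i : ℕ) = A i + 1 ∨ (A i : ℕ) = B i + 1) with hB | hA
  · exact ⟨i, .inl ⟨hB, fun j hj => (heq j hj).symm⟩⟩
  · exact ⟨i, .inr ⟨hA, heq⟩⟩

variable {M : Type*} [AddCommMonoid M] [DecidableEq ι]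

instance (i : ι) (A B : ι → Fin m) : Decidable (IsUnitStep i A B) :=
  inferInstanceAs (Decidable (_ ∧ _))

lemma ite_l1Dist_eq_one (A B : ι → Fin m) (x : M) :
    (if l1Dist A B = 1 then x else 0) =
      ∑ i, ((if IsUnitStep i A B then x else 0) + (if IsUnitStep i B A then x else 0)) := by
  by_cases h : l1Dist A B = 1
  · obtain ⟨i, hi⟩ := exists_isUnitStep_of_l1Dist_eq_one h
    rw [if_pos h, Fintype.sum_eq_single i]
    · rcases hi with hi | hi
      · simp [hi, hi.not_isUnitStep_swap]
      · simp [hi, hi.not_isUnitStep_swap]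
    · intro j hj
      rcases hi with hi | hi
      · simp [show ¬ IsUnitStep j A B from fun h' => hj (h'.unique hi), hi.not_isUnitStep_swap]
      · simp [show ¬ IsUnitStep j B A from fun h' => hj (h'.unique hi), hi.not_isUnitStep_swap]
  · rw [if_neg h]
    refine (Fintype.sum_eq_zero _ fun i => ?_).symm
    rw [if_neg fun h' => h h'.l1Dist_eq_one, if_neg fun h' => h h'.l1Dist_swap_eq_one, add_zero]

lemma sum_ite_isUnitStep (g : (ι → Fin m) → M) (i : ι) (A : ι → Fin m) :
    ∑ B, (if IsUnitStep i A B then g B else 0) =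
      if h : (A i : ℕ) + 1 < m then g (update A i ⟨A i + 1, h⟩) else 0 := by
  split_ifs with h
  · simp_rw [isUnitStep_iff_eq_update h]
    exact Fintype.sum_ite_eq' _ _
  · exact Fintype.sum_eq_zero _ fun B => if_neg fun hB => h hB.add_one_lt

theorem sum_ite_l1Dist_eq_one (g : (ι → Fin m) → (ι → Fin m) → M) (hg : ∀ A B, g A B = g B A) :
    ∑ A, ∑ B, (if l1Dist A B = 1 then g A B else 0) =
      2 • ∑ i, ∑ A, if h : (A i : ℕ) + 1 < m then g (update A i ⟨A i + 1, h⟩) A else 0 := by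
  have hup : ∀ i, ∑ A, ∑ B, (if IsUnitStep i A B then g A B else 0) =
      ∑ A, if h : (A i : ℕ) + 1 < m then g (update A i ⟨A i + 1, h⟩) A else 0 := fun i =>
    Fintype.sum_congr _ _ fun A => by simp_rw [hg A]; exact sum_ite_isUnitStep (g · A) i A
  have hdown : ∀ i, ∑ A, ∑ B, (if IsUnitStep i B A then g A B else 0) =
      ∑ A, ∑ B, (if IsUnitStep i A B then g A B else 0) := fun i => by
    rw [Finset.sum_comm]
    simp_rw [hg]
  simp_rw [ite_l1Dist_eq_one]
  rw [(sum_congr rfl fun A _ => sum_comm).trans sum_comm]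
  simp_rw [sum_add_distrib, hdown, hup, two_nsmul]

end Box

section Energy

variable (twoS : ℕ) {n ℓ : ℕ}

def energyTerm (Ψ : (Fin n → Fin ℓ) → ℂ) (j : Fin n) (X : Fin n → Fin ℓ) : ℝ :=
  if h : (X j : ℕ) + 1 < ℓ then
    ‖Ψ (update X j ⟨(X j : ℕ) + 1, h⟩) * (hopCoeff twoS X j (X j : ℕ) : ℂ)
      - Ψ X * (hopCoeff twoS X j ((X j : ℕ) + 1) : ℂ)‖ ^ 2
  else 0

lemma eform_eq_sum_energyTerm (Ψ : (Fin n → Fin ℓ) → ℂ) :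
    Eform twoS Ψ = Sval twoS * ∑ j, ∑ X, energyTerm twoS Ψ j X := rfl

lemma energyTerm_nonneg (Ψ : (Fin n → Fin ℓ) → ℂ) (j : Fin n) (X : Fin n → Fin ℓ) :
    0 ≤ energyTerm twoS Ψ j X := by
  unfold energyTerm
  split_ifs <;> positivity

lemma hopCoeff_eq_one {X : Fin n → Fin ℓ} {j : Fin n} {x : ℕ} (h : ∀ k ≠ j, (X k : ℕ) ≠ x) :
    hopCoeff twoS X j x = 1 := by
  rw [hopCoeff, filter_false_of_mem fun k _ hk => h k hk.1 hk.2]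
  simp

variable {twoS} {Ψ : (Fin n → Fin ℓ) → ℂ} {Φ : (Fin n → Fin (ℓ - n + 1)) → ℂ}

lemma energyTerm_unsqueeze (hnℓ : n ≤ ℓ)
    (hΦ : ∀ X : Fin n → Fin ℓ, Injective X →
      ∀ A : Fin n → Fin (ℓ - n + 1), (∀ i, (A i : ℕ) = squeeze X i) → Φ A = Ψ X)
    (A : Fin n → Fin (ℓ - n + 1)) (i : Fin n)
    (hA : (A i : ℕ) + 1 < ℓ - n + 1) :
    energyTerm twoS Ψ i (unsqueeze hnℓ A i) = ‖Φ (update A i ⟨A i + 1, hA⟩) - Φ A‖ ^ 2 := by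
  have hX := unsqueeze_injective hnℓ A i
  rw [energyTerm, dif_pos (unsqueeze_self_add_one_lt hnℓ A i hA),
    hopCoeff_eq_one twoS fun k hk => fun e => hk (hX (Fin.ext e)),
    hopCoeff_eq_one twoS fun k _ => unsqueeze_ne_unsqueeze_self_add_one hnℓ A i k,
    hΦ _ hX A fun k => (squeeze_unsqueeze hnℓ A i k).symm,
    hΦ _ (injective_update_add_one _ hX (unsqueeze_ne_unsqueeze_self_add_one hnℓ A i)) _
      fun k => (squeeze_update_unsqueeze hnℓ A i hA k).symm]
  simp

lemma sum_edge_le_sum_energyTerm (hnℓ : n ≤ ℓ)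
    (hΦ : ∀ X : Fin n → Fin ℓ, Injective X →
      ∀ A : Fin n → Fin (ℓ - n + 1), (∀ i, (A i : ℕ) = squeeze X i) → Φ A = Ψ X)
    (i : Fin n) :
    ∑ A, (if h : (A i : ℕ) + 1 < ℓ - n + 1 then ‖Φ (update A i ⟨A i + 1, h⟩) - Φ A‖ ^ 2 else 0)
      ≤ ∑ X, energyTerm twoS Ψ i X := by
  have hinj := unsqueeze_left_injective hnℓ i
  calc _ ≤ ∑ A, energyTerm twoS Ψ i (unsqueeze hnℓ A i) := sum_le_sum fun A _ => by
        split_ifs with hA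
        · exact (energyTerm_unsqueeze hnℓ hΦ A i hA).ge
        · exact energyTerm_nonneg twoS Ψ i _
    _ = ∑ X ∈ univ.map ⟨_, hinj⟩, energyTerm twoS Ψ i X :=
        (sum_map univ ⟨_, hinj⟩ (energyTerm twoS Ψ i)).symm
    _ ≤ ∑ X, energyTerm twoS Ψ i X := sum_le_univ_sum_of_nonneg (energyTerm_nonneg twoS Ψ i)

end Energy

end ChainConfig

theorem energy_form_laplacian_lower_bound_general (twoS : ℕ)
    {n ℓ : ℕ} (hnℓ : n ≤ ℓ)
    (Ψ : (Fin n → Fin ℓ) → ℂ)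
    (Φ : (Fin n → Fin (ℓ - n + 1)) → ℂ)
    (hΦ : ∀ X : Fin n → Fin ℓ, Function.Injective X →
      ∀ A : Fin n → Fin (ℓ - n + 1),
        (∀ i, (A i : ℕ) = (X i : ℕ) - (Finset.univ.filter fun j => X j < X i).card) →
        Φ A = Ψ X) :
    Sval twoS / 2 * ∑ A : Fin n → Fin (ℓ - n + 1), ∑ B : Fin n → Fin (ℓ - n + 1),
        (if (∑ i : Fin n, (((A i : ℕ) : ℤ) - ((B i : ℕ) : ℤ)).natAbs) = 1
          then ‖Φ A - Φ B‖ ^ 2 else 0) ≤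
      Eform twoS Ψ := by
  have hbox := ChainConfig.sum_ite_l1Dist_eq_one (fun A B => ‖Φ A - Φ B‖ ^ 2)
    fun A B => by rw [norm_sub_rev]
  simp only [ChainConfig.l1Dist, two_nsmul] at hbox
  rw [ChainConfig.eform_eq_sum_energyTerm]
  calc _ = Sval twoS / 2 * _ := congrArg _ hbox
    _ = Sval twoS * ∑ i, ∑ A, (if h : (A i : ℕ) + 1 < ℓ - n + 1
          then ‖Φ (Function.update A i ⟨A i + 1, h⟩) - Φ A‖ ^ 2 else 0) := by ring
    _ ≤ _ := mul_le_mul_of_nonneg_left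
        (Finset.sum_le_sum fun i _ => ChainConfig.sum_edge_le_sum_energyTerm hnℓ hΦ i)
        (by unfold Sval; positivity)

/-- The Heisenberg energy form dominates `S` times the quadratic form of
the free graph Laplacian on the box `{1,…,ℓ−n+1}^n` applied to the squeezed function `Φ`,
where `Φ(V(X)) = Ψ(X)` and `V` maps `x_i` to `x_i − #{j : x_j < x_i}`. -/
theorem energy_form_laplacian_lower_bound (twoS : ℕ) (hS : 1 ≤ twoS)
    {n ℓ : ℕ} (hn : 1 ≤ n) (hnℓ : n ≤ ℓ)
    (Ψ : (Fin n → Fin ℓ) → ℂ) (hΨ : SymmFun Ψ)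
    (Φ : (Fin n → Fin (ℓ - n + 1)) → ℂ)
    (hΦ : ∀ X : Fin n → Fin ℓ, Function.Injective X →
      ∀ A : Fin n → Fin (ℓ - n + 1),
        (∀ i, (A i : ℕ) = (X i : ℕ) - (Finset.univ.filter fun j => X j < X i).card) →
        Φ A = Ψ X) :
    Sval twoS / 2 * ∑ A : Fin n → Fin (ℓ - n + 1), ∑ B : Fin n → Fin (ℓ - n + 1),
        (if (∑ i : Fin n, (((A i : ℕ) : ℤ) - ((B i : ℕ) : ℤ)).natAbs) = 1
          then ‖Φ A - Φ B‖ ^ 2 else 0) ≤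
      Eform twoS Ψ :=
  energy_form_laplacian_lower_bound_general twoS hnℓ Ψ Φ hΦ
end
end

section
/- Let S ≥ 1/2 with 2S ∈ ℕ and 1 ≤ n ≤ ℓ. Let Ψ: {1,…,ℓ}^n → ℂ be permutation-symmetric with ∑_X |Ψ(X)|² = 1, and let Φ be the induced function on {1,…,ℓ−n+1}^n with Φ(V(X)) = Ψ(X) for X ∈ 𝒳_{ℓ,n}. Then ∑_{A ∈ {1,…,ℓ−n+1}^n} |Φ(A)|² ≥ 1 − (1/2) ∑_{x=1}^ℓ ρ(x,x) − ∑_{x=1}^{ℓ−1} ρ(x, x+1), where ρ(x,y) = n(n−1) ∑_{x_3,…,x_n ∈ {1,…,ℓ}} |Ψ(x, y, x_3, …, x_n)|² is the two-particle density of Ψ. -/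
open scoped BigOperators

noncomputable section

/-!
Split the configurations `X` into *separated* ones (injective, with no two particles on
neighbouring sites) and the rest. On a separated configuration the squeeze `V` preserves the
order of the particles, so `X` is recovered from `A = V(X)` as `x_i = a_i + #{j | a_j < a_i}`;
hence `V` is injective there and the weight of the separated configurations is at most `‖Φ‖²`.
A non-injective `X` has at least two ordered pairs of coincident particles, and an injective
non-separated one at least one ordered pair of neighbours, so the remaining weight is at most
`½ ∑ ρ(x,x) + ∑ ρ(x,x+1)`.
-/

open Finset Function

namespace Squeeze

variable {n ℓ : ℕ}

def numBelow {α : Type*} [LinearOrder α] (X : Fin n → α) (i : Fin n) : ℕ :=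
  #{j | X j < X i}

theorem numBelow_le {X : Fin n → Fin ℓ} (hX : Injective X) (i : Fin n) :
    numBelow X i ≤ X i := by
  calc numBelow X i ≤ #(Iio (X i)) :=
        card_le_card_of_injOn X (fun j hj => by simpa using hj) hX.injOn
    _ = X i := Fin.card_Iio _

theorem sub_numBelow_le {X : Fin n → Fin ℓ} (hX : Injective X) (i : Fin n) :
    (X i : ℕ) - numBelow X i ≤ ℓ - n := by
  have habove : #{j | X i ≤ X j} ≤ ℓ - X i :=
    (card_le_card_of_injOn X (fun j hj => by simpa using hj) hX.injOn).trans_eq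
      (Fin.card_Ici _)
  have hsplit := card_filter_add_card_filter_not (s := univ) (fun j => X j < X i)
  simp only [not_lt, card_univ, Fintype.card_fin] at hsplit
  have := (X i).isLt
  unfold numBelow
  omega

-- The reduction mod `ℓ - n + 1` only serves to land in `Fin`; by `val_squeeze` it is vacuous
-- for injective `X`.
def squeeze (X : Fin n → Fin ℓ) (i : Fin n) : Fin (ℓ - n + 1) :=
  Fin.ofNat _ ((X i : ℕ) - numBelow X i)

theorem val_squeeze {X : Fin n → Fin ℓ} (hX : Injective X) (i : Fin n) :
    (squeeze X i : ℕ) = X i - numBelow X i :=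
  Nat.mod_eq_of_lt (Nat.lt_succ_of_le (sub_numBelow_le hX i))

def IsSeparated (X : Fin n → Fin ℓ) : Prop :=
  Injective X ∧ ∀ p q, (X q : ℕ) ≠ X p + 1

instance : DecidablePred (IsSeparated (n := n) (ℓ := ℓ)) :=
  fun _ => inferInstanceAs (Decidable (_ ∧ _))

theorem numBelow_add_card_Ico {X : Fin n → Fin ℓ} {i j : Fin n} (hji : X j < X i) :
    numBelow X j + #{m | X j ≤ X m ∧ X m < X i} = numBelow X i := by
  have h := card_filter_add_card_filter_not (s := {m | X m < X i}) (fun m => X m < X j)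
  rw [filter_filter, filter_filter] at h
  have hlow : univ.filter (fun m => X m < X i ∧ X m < X j) = univ.filter (X · < X j) := by
    ext m
    simpa using fun h => h.trans hji
  have hmid : univ.filter (fun m => X m < X i ∧ ¬X m < X j) =
      univ.filter (fun m => X j ≤ X m ∧ X m < X i) := by
    ext m
    simp [and_comm]
  rwa [hlow, hmid] at h

theorem sub_numBelow_lt_of_lt {X : Fin n → Fin ℓ} (hX : IsSeparated X) {i j : Fin n}
    (hji : X j < X i) : (X j : ℕ) - numBelow X j < X i - numBelow X i := by
  have hgap : (X j : ℕ) + 1 < X i :=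
    Nat.lt_of_le_of_ne (Fin.lt_def.mp hji) (hX.2 j i).symm
  have hmid : #{m | X j ≤ X m ∧ X m < X i} ≤ #((Ico (X j : ℕ) (X i)).erase (X j + 1)) := by
    refine card_le_card_of_injOn (fun m => (X m : ℕ)) (fun m hm => ?_)
      (Fin.val_injective.comp hX.1).injOn
    simp only [coe_filter, mem_univ, true_and, Set.mem_ofPred_eq] at hm
    simp only [coe_erase, coe_Ico, Set.mem_sdiff, Set.mem_Ico, Set.mem_singleton_iff]
    exact ⟨⟨hm.1, hm.2⟩, hX.2 j m⟩
  rw [card_erase_of_mem (mem_Ico.mpr ⟨Nat.le_succ _, hgap⟩), Nat.card_Ico] at hmid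
  have := numBelow_add_card_Ico hji
  have := numBelow_le hX.1 j
  omega

theorem squeeze_lt_squeeze_iff {X : Fin n → Fin ℓ} (hX : IsSeparated X) {i j : Fin n} :
    squeeze X j < squeeze X i ↔ X j < X i := by
  rw [Fin.lt_def, val_squeeze hX.1, val_squeeze hX.1]
  refine ⟨fun h => ?_, sub_numBelow_lt_of_lt hX⟩
  rcases lt_trichotomy (X j) (X i) with hlt | heq | hgt
  · exact hlt
  · rw [hX.1 heq] at h
    exact absurd h (lt_irrefl _)
  · exact absurd (sub_numBelow_lt_of_lt hX hgt) h.not_gt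

theorem val_eq_squeeze_add_numBelow {X : Fin n → Fin ℓ} (hX : IsSeparated X) (i : Fin n) :
    (X i : ℕ) = squeeze X i + numBelow (squeeze X) i := by
  have hbelow : numBelow (squeeze X) i = numBelow X i := by
    simp only [numBelow, squeeze_lt_squeeze_iff hX]
  have := numBelow_le hX.1 i
  rw [hbelow, val_squeeze hX.1]
  omega

theorem squeeze_injOn : Set.InjOn (squeeze (n := n) (ℓ := ℓ)) {X | IsSeparated X} := by
  intro X hX Y hY h
  funext i
  apply Fin.ext
  rw [val_eq_squeeze_add_numBelow hX, val_eq_squeeze_add_numBelow hY, h]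

theorem sum_rho2_eq (Ψ : (Fin n → Fin ℓ) → ℂ) (s : Finset ℕ) (f : ℕ → ℕ) :
    ∑ x ∈ s, rho2 Ψ x (f x) = ∑ X, ‖Ψ X‖ ^ 2 *
      (#{p : Fin n × Fin n | p.1 ≠ p.2 ∧ (X p.1 : ℕ) ∈ s ∧ (X p.2 : ℕ) = f (X p.1)} : ℝ) := by
  unfold rho2
  rw [sum_comm]
  refine sum_congr rfl fun X _ => ?_
  rw [← mul_sum, ← Nat.cast_sum]
  congr 2
  rw [card_eq_sum_card_fiberwise (f := fun p : Fin n × Fin n => (X p.1 : ℕ)) (t := s)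
    (fun p hp => by simp_all)]
  refine sum_congr rfl fun x _ => ?_
  congr 1
  ext p
  simp only [mem_filter, mem_univ, true_and]
  grind

def numCoincident (X : Fin n → Fin ℓ) : ℕ :=
  #{p : Fin n × Fin n | p.1 ≠ p.2 ∧ X p.1 = X p.2}

def numNeighbours (X : Fin n → Fin ℓ) : ℕ :=
  #{p : Fin n × Fin n | p.1 ≠ p.2 ∧ (X p.2 : ℕ) = X p.1 + 1}

theorem sum_rho2_diag (Ψ : (Fin n → Fin ℓ) → ℂ) :
    ∑ x ∈ range ℓ, rho2 Ψ x x = ∑ X, ‖Ψ X‖ ^ 2 * (numCoincident X : ℝ) := by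
  refine (sum_rho2_eq Ψ (range ℓ) id).trans (sum_congr rfl fun X _ => ?_)
  congr 3
  ext p
  simp only [mem_filter, mem_univ, true_and, mem_range, Fin.is_lt, id, Fin.val_inj, eq_comm]

theorem sum_rho2_succ (Ψ : (Fin n → Fin ℓ) → ℂ) :
    ∑ x ∈ range (ℓ - 1), rho2 Ψ x (x + 1) = ∑ X, ‖Ψ X‖ ^ 2 * (numNeighbours X : ℝ) := by
  refine (sum_rho2_eq Ψ (range (ℓ - 1)) (· + 1)).trans (sum_congr rfl fun X _ => ?_)
  congr 3
  ext p
  have := (X p.2).is_lt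
  simp only [mem_filter, mem_univ, true_and, mem_range]
  omega

theorem two_le_numCoincident {X : Fin n → Fin ℓ} (hX : ¬Injective X) :
    2 ≤ numCoincident X := by
  obtain ⟨p, q, hXpq, hpq⟩ := not_injective_iff.mp hX
  calc 2 = #{(p, q), (q, p)} := (card_pair (by simp [hpq])).symm
    _ ≤ numCoincident X := card_le_card (by simp [subset_iff, hpq, hXpq, Ne.symm hpq])

theorem one_le_of_not_isSeparated {X : Fin n → Fin ℓ} (hX : ¬IsSeparated X) :
    (1 : ℝ) ≤ numCoincident X / 2 + numNeighbours X := by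
  by_cases hinj : Injective X
  · obtain ⟨p, q, hpq⟩ : ∃ p q, (X q : ℕ) = X p + 1 := by
      simpa [IsSeparated, hinj] using hX
    have : 1 ≤ numNeighbours X :=
      card_pos.mpr ⟨(p, q), mem_filter.mpr ⟨mem_univ _, fun h : p = q => by subst h; omega, hpq⟩⟩
    have : (1 : ℝ) ≤ numNeighbours X := by exact_mod_cast this
    have : (0 : ℝ) ≤ numCoincident X := by positivity
    linarith
  · have : (2 : ℝ) ≤ numCoincident X := by exact_mod_cast two_le_numCoincident hinj
    have : (0 : ℝ) ≤ numNeighbours X := by positivity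
    linarith

theorem sum_isSeparated_norm_sq_le (Ψ : (Fin n → Fin ℓ) → ℂ)
    (Φ : (Fin n → Fin (ℓ - n + 1)) → ℂ) (hΦ : ∀ X, IsSeparated X → Φ (squeeze X) = Ψ X) :
    ∑ X with IsSeparated X, ‖Ψ X‖ ^ 2 ≤ ∑ A, ‖Φ A‖ ^ 2 :=
  calc ∑ X with IsSeparated X, ‖Ψ X‖ ^ 2
      = ∑ X with IsSeparated X, ‖Φ (squeeze X)‖ ^ 2 :=
        sum_congr rfl fun X hX => by rw [hΦ X (mem_filter.mp hX).2]
    _ = ∑ A ∈ (univ.filter IsSeparated).image squeeze, ‖Φ A‖ ^ 2 :=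
        (sum_image (f := (‖Φ ·‖ ^ 2)) fun X hX Y hY =>
          squeeze_injOn (mem_filter.mp hX).2 (mem_filter.mp hY).2).symm
    _ ≤ ∑ A, ‖Φ A‖ ^ 2 := sum_le_univ_sum_of_nonneg fun _ => by positivity

theorem sum_not_isSeparated_norm_sq_le (Ψ : (Fin n → Fin ℓ) → ℂ) :
    ∑ X with ¬IsSeparated X, ‖Ψ X‖ ^ 2 ≤
      1 / 2 * ∑ x ∈ range ℓ, rho2 Ψ x x + ∑ x ∈ range (ℓ - 1), rho2 Ψ x (x + 1) := by
  rw [sum_rho2_diag, sum_rho2_succ, mul_sum, ← sum_add_distrib]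
  calc ∑ X with ¬IsSeparated X, ‖Ψ X‖ ^ 2
      ≤ ∑ X with ¬IsSeparated X, ‖Ψ X‖ ^ 2 * (numCoincident X / 2 + numNeighbours X) :=
        sum_le_sum fun X hX =>
          le_mul_of_one_le_right (by positivity) (one_le_of_not_isSeparated (mem_filter.mp hX).2)
    _ ≤ ∑ X, ‖Ψ X‖ ^ 2 * (numCoincident X / 2 + numNeighbours X) :=
        sum_le_sum_of_subset_of_nonneg (filter_subset _ _) fun _ _ _ => by positivity
    _ = _ := sum_congr rfl fun X _ => by ring

end Squeeze

open Squeeze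

theorem squeezed_norm_lower_bound_general
    {n ℓ : ℕ}
    (Ψ : (Fin n → Fin ℓ) → ℂ)
    (hnorm : ∑ X : Fin n → Fin ℓ, ‖Ψ X‖ ^ 2 = 1)
    (Φ : (Fin n → Fin (ℓ - n + 1)) → ℂ)
    (hΦ : ∀ X : Fin n → Fin ℓ, Function.Injective X →
      ∀ A : Fin n → Fin (ℓ - n + 1),
        (∀ i, (A i : ℕ) = (X i : ℕ) - (Finset.univ.filter fun j => X j < X i).card) →
        Φ A = Ψ X) :
    1 - (1 / 2) * (∑ x ∈ Finset.range ℓ, rho2 Ψ x x)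
        - ∑ x ∈ Finset.range (ℓ - 1), rho2 Ψ x (x + 1) ≤
      ∑ A : Fin n → Fin (ℓ - n + 1), ‖Φ A‖ ^ 2 := by
  have hsplit := sum_filter_add_sum_filter_not univ IsSeparated (‖Ψ ·‖ ^ 2)
  have hgood := sum_isSeparated_norm_sq_le Ψ Φ fun X hX => hΦ X hX.1 _ (val_squeeze hX.1)
  have hbad := sum_not_isSeparated_norm_sq_le Ψ
  linarith

/-- Norm lower bound for the squeezed wave function:
`‖Φ‖² ≥ 1 − (1/2)∑_x ρ(x,x) − ∑_x ρ(x,x+1)`. -/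
theorem squeezed_norm_lower_bound (twoS : ℕ) (hS : 1 ≤ twoS)
    {n ℓ : ℕ} (hn : 1 ≤ n) (hnℓ : n ≤ ℓ)
    (Ψ : (Fin n → Fin ℓ) → ℂ) (hΨ : SymmFun Ψ)
    (hnorm : ∑ X : Fin n → Fin ℓ, ‖Ψ X‖ ^ 2 = 1)
    (Φ : (Fin n → Fin (ℓ - n + 1)) → ℂ)
    (hΦ : ∀ X : Fin n → Fin ℓ, Function.Injective X →
      ∀ A : Fin n → Fin (ℓ - n + 1),
        (∀ i, (A i : ℕ) = (X i : ℕ) - (Finset.univ.filter fun j => X j < X i).card) →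
        Φ A = Ψ X) :
    1 - (1 / 2) * (∑ x ∈ Finset.range ℓ, rho2 Ψ x x)
        - ∑ x ∈ Finset.range (ℓ - 1), rho2 Ψ x (x + 1) ≤
      ∑ A : Fin n → Fin (ℓ - n + 1), ‖Φ A‖ ^ 2 :=
  squeezed_norm_lower_bound_general Ψ hnorm Φ hΦ

end
end

section
/- Let S ≥ 1/2 with 2S ∈ ℕ, ℓ ≥ 1 and n ≥ 1. Let Ψ: {1,…,ℓ}^n → ℂ be permutation-symmetric with ∑_X |Ψ(X)|² = 1 and supported on configurations with at most 2S particles per site (i.e., Ψ(X) = 0 whenever #{j : x_j = x} > 2S for some x). Then ∑_{x=1}^{ℓ−1} ρ(x+1, x) ≤ (4/ℓ)·n(n−1) + 4(n−1)·√(n/S)·E_{ℓ,n}(Ψ)^{1/2}, where ρ(x,y) = n(n−1) ∑_{x_3,…,x_n} |Ψ(x,y,x_3,…,x_n)|² is the two-particle density of Ψ. -/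
open scoped BigOperators

noncomputable section

/-! ### auxiliary definitions -/

def eterm (twoS : ℕ) {n ℓ : ℕ} (Ψ : (Fin n → Fin ℓ) → ℂ) (j : Fin n)
    (X : Fin n → Fin ℓ) : ℝ :=
  if h : (X j : ℕ) + 1 < ℓ then
    ‖Ψ (Function.update X j ⟨(X j : ℕ) + 1, h⟩) * (hopCoeff twoS X j (X j : ℕ) : ℂ)
      - Ψ X * (hopCoeff twoS X j ((X j : ℕ) + 1) : ℂ)‖ ^ 2
  else 0

lemma Eform_eq_sum_eterm (twoS : ℕ) {n ℓ : ℕ} (Ψ : (Fin n → Fin ℓ) → ℂ) :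
    Eform twoS Ψ = Sval twoS * ∑ j : Fin n, ∑ X : Fin n → Fin ℓ, eterm twoS Ψ j X := rfl

def updS {n ℓ : ℕ} (j : Fin n) (X : Fin n → Fin ℓ) : Fin n → Fin ℓ :=
  if h : (X j : ℕ) + 1 < ℓ then Function.update X j ⟨(X j : ℕ) + 1, h⟩ else X

def qfun (twoS : ℕ) {n ℓ : ℕ} (Ψ : (Fin n → Fin ℓ) → ℂ) (j : Fin n)
    (X : Fin n → Fin ℓ) : ℝ :=
  Real.sqrt (eterm twoS Ψ j X) * (‖Ψ (updS j X)‖ + ‖Ψ X‖)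

def gamma2 {n ℓ : ℕ} (Ψ : (Fin n → Fin ℓ) → ℂ) (j k : Fin n) (a c : ℕ) : ℝ :=
  ∑ X : Fin n → Fin ℓ, if (X j : ℕ) = a ∧ (X k : ℕ) = c then ‖Ψ X‖ ^ 2 else 0

def Bsum (twoS : ℕ) {n ℓ : ℕ} (Ψ : (Fin n → Fin ℓ) → ℂ) (j k : Fin n) (z c : ℕ) : ℝ :=
  ∑ X : Fin n → Fin ℓ, if (X j : ℕ) = z ∧ (X k : ℕ) = c then qfun twoS Ψ j X else 0

/-! ### basic facts -/

lemma eterm_nonneg (twoS : ℕ) {n ℓ : ℕ} (Ψ : (Fin n → Fin ℓ) → ℂ) (j : Fin n)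
    (X : Fin n → Fin ℓ) : 0 ≤ eterm twoS Ψ j X := by
  unfold eterm; split <;> positivity

lemma qfun_nonneg (twoS : ℕ) {n ℓ : ℕ} (Ψ : (Fin n → Fin ℓ) → ℂ) (j : Fin n)
    (X : Fin n → Fin ℓ) : 0 ≤ qfun twoS Ψ j X := by
  unfold qfun; positivity

lemma gamma2_nonneg {n ℓ : ℕ} (Ψ : (Fin n → Fin ℓ) → ℂ) (j k : Fin n) (a c : ℕ) :
    0 ≤ gamma2 Ψ j k a c := by
  unfold gamma2
  apply Finset.sum_nonneg
  intro X _
  split <;> positivity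

lemma Bsum_nonneg (twoS : ℕ) {n ℓ : ℕ} (Ψ : (Fin n → Fin ℓ) → ℂ) (j k : Fin n) (z c : ℕ) :
    0 ≤ Bsum twoS Ψ j k z c := by
  unfold Bsum
  apply Finset.sum_nonneg
  intro X _
  split
  · exact qfun_nonneg _ _ _ _
  · exact le_refl 0

lemma hopCoeff_nonneg (twoS : ℕ) {n ℓ : ℕ} (X : Fin n → Fin ℓ) (j : Fin n) (x : ℕ) :
    0 ≤ hopCoeff twoS X j x := Real.sqrt_nonneg _

lemma hopCoeff_le_one (twoS : ℕ) {n ℓ : ℕ} (X : Fin n → Fin ℓ) (j : Fin n) (x : ℕ) :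
    hopCoeff twoS X j x ≤ 1 := by
  unfold hopCoeff
  rw [Real.sqrt_le_one]
  have : 0 ≤ ((Finset.univ.filter fun k => k ≠ j ∧ (X k : ℕ) = x).card : ℝ) / (twoS : ℝ) := by
    positivity
  linarith

lemma sum_comp_perm {n ℓ : ℕ} (f : (Fin n → Fin ℓ) → ℝ) (π : Equiv.Perm (Fin n)) :
    ∑ X : Fin n → Fin ℓ, f (X ∘ π) = ∑ X : Fin n → Fin ℓ, f X := by
  apply Fintype.sum_bijective (fun X : Fin n → Fin ℓ => X ∘ π)
  · constructor
    · intro a b h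
      funext i
      have := congrFun h (π.symm i)
      simpa using this
    · intro Y
      refine ⟨Y ∘ π.symm, ?_⟩
      funext i
      simp
  · intro X
    rfl

lemma update_comp_swap {n ℓ : ℕ} (X : Fin n → Fin ℓ) (j k : Fin n) (w : Fin ℓ)
    (hjk : X j = X k) :
    Function.update X j w = Function.update X k w ∘ Equiv.swap j k := by
  funext i
  simp only [Function.comp_apply]
  rcases eq_or_ne i j with rfl | hij
  · rw [Equiv.swap_apply_left, Function.update_self, Function.update_self]
  · rcases eq_or_ne i k with rfl | hik
    · rw [Equiv.swap_apply_right, Function.update_of_ne hij,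
        Function.update_of_ne (Ne.symm hij)]
      exact hjk.symm
    · rw [Equiv.swap_apply_of_ne_of_ne hij hik, Function.update_of_ne hij,
        Function.update_of_ne hik]


/-! new material -/

lemma update_comp_perm {n ℓ : ℕ} (X : Fin n → Fin ℓ) (π : Equiv.Perm (Fin n))
    (j : Fin n) (v : Fin ℓ) :
    Function.update (X ∘ π) j v = (Function.update X (π j) v) ∘ π := by
  funext i
  simp only [Function.comp_apply]
  rcases eq_or_ne i j with rfl | hij
  · rw [Function.update_self, Function.update_self]
  · rw [Function.update_of_ne hij, Function.update_of_ne (fun h => hij (π.injective h))]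
    rfl

lemma hopCoeff_comp_perm (twoS : ℕ) {n ℓ : ℕ} (X : Fin n → Fin ℓ)
    (π : Equiv.Perm (Fin n)) (j : Fin n) (x : ℕ) :
    hopCoeff twoS (X ∘ π) j x = hopCoeff twoS X (π j) x := by
  have hcard : (Finset.univ.filter fun k => k ≠ j ∧ ((X ∘ π) k : ℕ) = x).card
      = (Finset.univ.filter fun k => k ≠ π j ∧ (X k : ℕ) = x).card := by
    apply Finset.card_nbij' (fun k => π k) (fun k => π.symm k)
    · intro a ha
      simp only [Finset.mem_coe, Finset.mem_filter, Finset.mem_univ, true_and] at ha ⊢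
      exact ⟨fun h => ha.1 (π.injective h), ha.2⟩
    · intro a ha
      simp only [Finset.mem_coe, Finset.mem_filter, Finset.mem_univ, true_and] at ha ⊢
      constructor
      · intro h
        apply ha.1
        rw [← h]
        simp
      · simpa using ha.2
    · intro a _; simp
    · intro a _; simp
  unfold hopCoeff
  rw [hcard]

lemma eterm_comp_perm (twoS : ℕ) {n ℓ : ℕ} {Ψ : (Fin n → Fin ℓ) → ℂ}
    (hΨ : SymmFun Ψ) (π : Equiv.Perm (Fin n)) (j : Fin n) (X : Fin n → Fin ℓ) :
    eterm twoS Ψ j (X ∘ π) = eterm twoS Ψ (π j) X := by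
  unfold eterm
  simp only [Function.comp_apply]
  by_cases h : (X (π j) : ℕ) + 1 < ℓ
  · rw [dif_pos h, dif_pos h]
    rw [update_comp_perm X π j ⟨(X (π j) : ℕ) + 1, h⟩]
    rw [hΨ π, hΨ π, hopCoeff_comp_perm, hopCoeff_comp_perm]
  · rw [dif_neg h, dif_neg h]

lemma sum_eterm_eq (twoS : ℕ) {n ℓ : ℕ} {Ψ : (Fin n → Fin ℓ) → ℂ}
    (hΨ : SymmFun Ψ) (j j' : Fin n) :
    ∑ X : Fin n → Fin ℓ, eterm twoS Ψ j' X = ∑ X : Fin n → Fin ℓ, eterm twoS Ψ j X := by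
  have h1 : ∀ X : Fin n → Fin ℓ, eterm twoS Ψ j (X ∘ Equiv.swap j j')
      = eterm twoS Ψ j' X := by
    intro X
    rw [eterm_comp_perm twoS hΨ (Equiv.swap j j') j X, Equiv.swap_apply_left]
  calc ∑ X : Fin n → Fin ℓ, eterm twoS Ψ j' X
      = ∑ X : Fin n → Fin ℓ, eterm twoS Ψ j (X ∘ Equiv.swap j j') := by
        exact (Finset.sum_congr rfl (fun X _ => (h1 X).symm))
    _ = ∑ X : Fin n → Fin ℓ, eterm twoS Ψ j X := sum_comp_perm _ _

lemma gamma2_perm_pair {n ℓ : ℕ} {Ψ : (Fin n → Fin ℓ) → ℂ} (hΨ : SymmFun Ψ)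
    (π : Equiv.Perm (Fin n)) (j k : Fin n) (a c : ℕ) :
    gamma2 Ψ (π j) (π k) a c = gamma2 Ψ j k a c := by
  unfold gamma2
  have h1 : ∀ X : Fin n → Fin ℓ,
      (if ((X ∘ π) j : ℕ) = a ∧ ((X ∘ π) k : ℕ) = c then ‖Ψ (X ∘ π)‖ ^ 2 else 0)
      = (if (X (π j) : ℕ) = a ∧ (X (π k) : ℕ) = c then ‖Ψ X‖ ^ 2 else 0) := by
    intro X
    rw [hΨ π]
    rfl
  rw [← Finset.sum_congr rfl (fun X _ => h1 X)]
  exact sum_comp_perm (fun X => if (X j : ℕ) = a ∧ (X k : ℕ) = c then ‖Ψ X‖ ^ 2 else 0) π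

lemma exists_perm_pair {n : ℕ} (j k j' k' : Fin n) (hjk : j ≠ k) (hj'k' : j' ≠ k') :
    ∃ π : Equiv.Perm (Fin n), π j' = j ∧ π k' = k := by
  refine ⟨(Equiv.swap j' j).trans (Equiv.swap ((Equiv.swap j' j) k') k), ?_, ?_⟩
  · simp only [Equiv.trans_apply, Equiv.swap_apply_left]
    have h1 : (Equiv.swap j' j) k' ≠ j := by
      intro h
      apply hj'k'
      have := (Equiv.swap j' j).injective (h.trans (Equiv.swap_apply_left j' j).symm)
      exact this.symm ▸ rfl
    rw [Equiv.swap_apply_of_ne_of_ne (Ne.symm h1) hjk]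
  · simp only [Equiv.trans_apply, Equiv.swap_apply_left]

lemma gamma2_pair_eq {n ℓ : ℕ} {Ψ : (Fin n → Fin ℓ) → ℂ} (hΨ : SymmFun Ψ)
    {j k j' k' : Fin n} (hjk : j ≠ k) (hj'k' : j' ≠ k') (a c : ℕ) :
    gamma2 Ψ j' k' a c = gamma2 Ψ j k a c := by
  obtain ⟨π, hπj, hπk⟩ := exists_perm_pair j k j' k' hjk hj'k'
  rw [← hπj, ← hπk, gamma2_perm_pair hΨ]

lemma gamma2_swap_args {n ℓ : ℕ} {Ψ : (Fin n → Fin ℓ) → ℂ} (hΨ : SymmFun Ψ)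
    {j k : Fin n} (hjk : j ≠ k) (a c : ℕ) :
    gamma2 Ψ j k a c = gamma2 Ψ j k c a := by
  have h1 : gamma2 Ψ k j a c = gamma2 Ψ j k a c := gamma2_pair_eq hΨ hjk (Ne.symm hjk) a c
  rw [← h1]
  unfold gamma2
  apply Finset.sum_congr rfl
  intro X _
  exact if_congr and_comm rfl rfl

lemma rho2_eq_gamma2 {n ℓ : ℕ} {Ψ : (Fin n → Fin ℓ) → ℂ} (hΨ : SymmFun Ψ)
    {j k : Fin n} (hjk : j ≠ k) (a c : ℕ) :
    rho2 Ψ a c = ((n : ℝ) * n - n) * gamma2 Ψ j k a c := by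
  unfold rho2
  have key : ∀ X : Fin n → Fin ℓ, ‖Ψ X‖ ^ 2 *
      ((Finset.univ.filter fun p : Fin n × Fin n =>
        p.1 ≠ p.2 ∧ (X p.1 : ℕ) = a ∧ (X p.2 : ℕ) = c).card : ℝ)
      = ∑ p : Fin n × Fin n,
          if p.1 ≠ p.2 ∧ (X p.1 : ℕ) = a ∧ (X p.2 : ℕ) = c then ‖Ψ X‖ ^ 2 else 0 := by
    intro X
    rw [Finset.card_filter]
    push_cast
    rw [Finset.mul_sum]
    apply Finset.sum_congr rfl
    intro p _
    rw [mul_ite, mul_one, mul_zero]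
  rw [Finset.sum_congr rfl (fun X _ => key X), Finset.sum_comm]
  have key2 : ∀ p : Fin n × Fin n, (∑ X : Fin n → Fin ℓ,
      if p.1 ≠ p.2 ∧ (X p.1 : ℕ) = a ∧ (X p.2 : ℕ) = c then ‖Ψ X‖ ^ 2 else 0)
      = if p.1 ≠ p.2 then gamma2 Ψ j k a c else 0 := by
    intro p
    by_cases hp : p.1 ≠ p.2
    · rw [if_pos hp]
      have : (∑ X : Fin n → Fin ℓ,
          if p.1 ≠ p.2 ∧ (X p.1 : ℕ) = a ∧ (X p.2 : ℕ) = c then ‖Ψ X‖ ^ 2 else 0)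
          = gamma2 Ψ p.1 p.2 a c := by
        unfold gamma2
        apply Finset.sum_congr rfl
        intro X _
        simp only [hp, true_and, ne_eq, not_false_eq_true]
      rw [this]
      exact gamma2_pair_eq hΨ hjk hp a c
    · rw [if_neg hp]
      apply Finset.sum_eq_zero
      intro X _
      rw [if_neg]
      tauto
  rw [Finset.sum_congr rfl (fun p _ => key2 p)]
  rw [← Finset.sum_filter, Finset.sum_const, nsmul_eq_mul]
  congr 1
  have hset : (Finset.univ.filter fun p : Fin n × Fin n => p.1 ≠ p.2)
      = Finset.univ.offDiag := by
    ext p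
    simp [Finset.mem_offDiag]
  rw [hset, Finset.offDiag_card]
  have hn : 0 < n := j.pos
  have hcard : (Finset.univ : Finset (Fin n)).card = n := by simp
  rw [hcard]
  have hle : n ≤ n * n := Nat.le_mul_of_pos_left n hn
  push_cast [Nat.cast_sub hle]
  ring

section Part3

variable {twoS n ℓ : ℕ} {Ψ : (Fin n → Fin ℓ) → ℂ}

lemma updS_eq_of {j : Fin n} (X : Fin n → Fin ℓ) {z : ℕ} (hXj : (X j : ℕ) = z)
    (hz : z + 1 < ℓ) : updS j X = Function.update X j ⟨z + 1, hz⟩ := by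
  unfold updS
  have h : (X j : ℕ) + 1 < ℓ := by omega
  rw [dif_pos h]
  have : (⟨(X j : ℕ) + 1, h⟩ : Fin ℓ) = ⟨z + 1, hz⟩ := by
    apply Fin.ext
    simp only [hXj]
  rw [this]

lemma occ_update_ne (X : Fin n → Fin ℓ) (j : Fin n) (w : Fin ℓ) (y : ℕ)
    (hwy : (w : ℕ) ≠ y) :
    occ (Function.update X j w) y
      = (Finset.univ.filter fun k => k ≠ j ∧ (X k : ℕ) = y).card := by
  unfold occ
  congr 1
  ext k
  simp only [Finset.mem_filter, Finset.mem_univ, true_and]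
  rcases eq_or_ne k j with rfl | hkj
  · rw [Function.update_self]
    simp [hwy]
  · rw [Function.update_of_ne hkj]
    simp [hkj]

lemma occ_eq_off (X : Fin n → Fin ℓ) (j : Fin n) (y : ℕ) (hXj : (X j : ℕ) ≠ y) :
    occ X y = (Finset.univ.filter fun k => k ≠ j ∧ (X k : ℕ) = y).card := by
  unfold occ
  congr 1
  ext k
  simp only [Finset.mem_filter, Finset.mem_univ, true_and]
  rcases eq_or_ne k j with rfl | hkj
  · simp [hXj]
  · simp [hkj]

lemma exch (hΨ : SymmFun Ψ) {j k : Fin n} (hjk : j ≠ k) {z c : ℕ} (hz : z + 1 < ℓ)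
    (k'' : Fin n) (hk''j : k'' ≠ j) (hk''k : k'' ≠ k) :
    ∑ X ∈ Finset.univ.filter
        (fun X : Fin n → Fin ℓ => ((X j : ℕ) = z ∧ (X k : ℕ) = c) ∧ (X k'' : ℕ) = z),
        ‖Ψ (Function.update X j (⟨z + 1, hz⟩ : Fin ℓ))‖ ^ 2
      = ∑ X ∈ Finset.univ.filter
        (fun X : Fin n → Fin ℓ => ((X j : ℕ) = z ∧ (X k : ℕ) = c) ∧ (X k'' : ℕ) = z + 1),
        ‖Ψ X‖ ^ 2 := by
  have hz0 : z < ℓ := by omega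
  have key : ∀ X ∈ Finset.univ.filter
      (fun X : Fin n → Fin ℓ => ((X j : ℕ) = z ∧ (X k : ℕ) = c) ∧ (X k'' : ℕ) = z),
      ‖Ψ (Function.update X j (⟨z + 1, hz⟩ : Fin ℓ))‖ ^ 2
        = ‖Ψ (Function.update X k'' (⟨z + 1, hz⟩ : Fin ℓ))‖ ^ 2 := by
    intro X hX
    simp only [Finset.mem_filter, Finset.mem_univ, true_and] at hX
    have hXe : X j = X k'' := Fin.ext (by rw [hX.1.1, hX.2])
    rw [update_comp_swap X j k'' (⟨z + 1, hz⟩ : Fin ℓ) hXe, hΨ (Equiv.swap j k'')]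
  rw [Finset.sum_congr rfl key]
  apply Finset.sum_nbij' (fun X => Function.update X k'' (⟨z + 1, hz⟩ : Fin ℓ))
    (fun Y => Function.update Y k'' (⟨z, hz0⟩ : Fin ℓ))
  · intro X hX
    simp only [Finset.mem_filter, Finset.mem_univ, true_and] at hX ⊢
    rw [Function.update_of_ne (Ne.symm hk''j), Function.update_of_ne (Ne.symm hk''k),
      Function.update_self]
    exact ⟨hX.1, rfl⟩
  · intro Y hY
    simp only [Finset.mem_filter, Finset.mem_univ, true_and] at hY ⊢
    rw [Function.update_of_ne (Ne.symm hk''j), Function.update_of_ne (Ne.symm hk''k),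
      Function.update_self]
    exact ⟨hY.1, rfl⟩
  · intro X hX
    simp only [Finset.mem_filter, Finset.mem_univ, true_and] at hX
    rw [Function.update_idem]
    have : (⟨z, hz0⟩ : Fin ℓ) = X k'' := Fin.ext (by simp [hX.2])
    rw [this, Function.update_eq_self]
  · intro Y hY
    simp only [Finset.mem_filter, Finset.mem_univ, true_and] at hY
    rw [Function.update_idem]
    have : (⟨z + 1, hz⟩ : Fin ℓ) = Y k'' := Fin.ext (by simp [hY.2])
    rw [this, Function.update_eq_self]
  · intro X hX
    rfl

end Part3

section Part4

variable {twoS n ℓ : ℕ} {Ψ : (Fin n → Fin ℓ) → ℂ}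

lemma miracle (hS : 1 ≤ twoS) (hΨ : SymmFun Ψ)
    (hsupp : ∀ X : Fin n → Fin ℓ, (∃ x : ℕ, twoS < occ X x) → Ψ X = 0)
    {j k : Fin n} (hjk : j ≠ k) {z c : ℕ} (hz : z + 1 < ℓ) (hcz : c ≠ z)
    (hcz1 : c ≠ z + 1) :
    ∑ X ∈ Finset.univ.filter (fun X : Fin n → Fin ℓ => (X j : ℕ) = z ∧ (X k : ℕ) = c),
        ‖Ψ (Function.update X j (⟨z + 1, hz⟩ : Fin ℓ))‖ ^ 2 * (1 - hopCoeff twoS X j z ^ 2)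
      = ∑ X ∈ Finset.univ.filter (fun X : Fin n → Fin ℓ => (X j : ℕ) = z ∧ (X k : ℕ) = c),
        ‖Ψ X‖ ^ 2 * (1 - hopCoeff twoS X j (z + 1) ^ 2) := by
  classical
  set F := Finset.univ.filter (fun X : Fin n → Fin ℓ => (X j : ℕ) = z ∧ (X k : ℕ) = c)
    with hF
  have htwoS : (0 : ℝ) < (twoS : ℝ) := by
    have : (1 : ℝ) ≤ (twoS : ℝ) := by exact_mod_cast hS
    linarith
  -- the occupation numbers
  set m : (Fin n → Fin ℓ) → ℕ → ℕ :=
    fun X y => (Finset.univ.filter fun k' => k' ≠ j ∧ (X k' : ℕ) = y).card with hm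
  -- rewrite the left factors using the support assumption
  have hA : ∀ X ∈ F, ‖Ψ (Function.update X j (⟨z + 1, hz⟩ : Fin ℓ))‖ ^ 2
      * (1 - hopCoeff twoS X j z ^ 2)
      = ‖Ψ (Function.update X j (⟨z + 1, hz⟩ : Fin ℓ))‖ ^ 2 * ((m X z : ℝ) / twoS) := by
    intro X hX
    by_cases hψ : Ψ (Function.update X j (⟨z + 1, hz⟩ : Fin ℓ)) = 0
    · rw [hψ]; simp
    · have hmz : m X z ≤ twoS := by
        by_contra hc
        apply hψ
        apply hsupp
        refine ⟨z, ?_⟩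
        rw [occ_update_ne X j _ z (by simp)]
        simp only [hm] at hc
        omega
      have harg : (0 : ℝ) ≤ 1 - (m X z : ℝ) / twoS := by
        rw [sub_nonneg, div_le_one htwoS]
        exact_mod_cast hmz
      have : hopCoeff twoS X j z ^ 2 = 1 - (m X z : ℝ) / twoS := by
        unfold hopCoeff
        rw [Real.sq_sqrt harg]
      rw [this]
      ring_nf
  have hB : ∀ X ∈ F, ‖Ψ X‖ ^ 2 * (1 - hopCoeff twoS X j (z + 1) ^ 2)
      = ‖Ψ X‖ ^ 2 * ((m X (z + 1) : ℝ) / twoS) := by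
    intro X hX
    simp only [hF, Finset.mem_filter, Finset.mem_univ, true_and] at hX
    by_cases hψ : Ψ X = 0
    · rw [hψ]; simp
    · have hmz : m X (z + 1) ≤ twoS := by
        by_contra hc
        apply hψ
        apply hsupp
        refine ⟨z + 1, ?_⟩
        rw [occ_eq_off X j (z + 1) (by omega)]
        simp only [hm] at hc
        omega
      have harg : (0 : ℝ) ≤ 1 - (m X (z + 1) : ℝ) / twoS := by
        rw [sub_nonneg, div_le_one htwoS]
        exact_mod_cast hmz
      have : hopCoeff twoS X j (z + 1) ^ 2 = 1 - (m X (z + 1) : ℝ) / twoS := by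
        unfold hopCoeff
        rw [Real.sq_sqrt harg]
      rw [this]
      ring_nf
  rw [Finset.sum_congr rfl hA, Finset.sum_congr rfl hB]
  -- clear the denominators
  have hdiv : ∀ (g : (Fin n → Fin ℓ) → ℝ) (mm : (Fin n → Fin ℓ) → ℕ),
      ∑ X ∈ F, g X * ((mm X : ℝ) / twoS) = (∑ X ∈ F, g X * (mm X : ℝ)) / twoS := by
    intro g mm
    rw [Finset.sum_div]
    apply Finset.sum_congr rfl
    intro X _
    ring
  rw [hdiv _ (fun X => m X z), hdiv _ (fun X => m X (z + 1))]
  congr 1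
  -- expand the cardinalities as sums over k''
  have hexp : ∀ (X : Fin n → Fin ℓ) (y : ℕ), ((m X y : ℕ) : ℝ)
      = ∑ k' : Fin n, (if k' ≠ j ∧ (X k' : ℕ) = y then (1 : ℝ) else 0) := by
    intro X y
    rw [hm]
    simp only [Finset.card_filter]
    push_cast
    rfl
  have hL : ∑ X ∈ F, ‖Ψ (Function.update X j (⟨z + 1, hz⟩ : Fin ℓ))‖ ^ 2 * ((m X z : ℕ) : ℝ)
      = ∑ k' : Fin n, ∑ X ∈ F,
          (if k' ≠ j ∧ (X k' : ℕ) = z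
            then ‖Ψ (Function.update X j (⟨z + 1, hz⟩ : Fin ℓ))‖ ^ 2 else 0) := by
    rw [Finset.sum_comm]
    apply Finset.sum_congr rfl
    intro X _
    rw [hexp X z, Finset.mul_sum]
    apply Finset.sum_congr rfl
    intro k' _
    rw [mul_ite, mul_one, mul_zero]
  have hR : ∑ X ∈ F, ‖Ψ X‖ ^ 2 * ((m X (z + 1) : ℕ) : ℝ)
      = ∑ k' : Fin n, ∑ X ∈ F,
          (if k' ≠ j ∧ (X k' : ℕ) = z + 1 then ‖Ψ X‖ ^ 2 else 0) := by
    rw [Finset.sum_comm]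
    apply Finset.sum_congr rfl
    intro X _
    rw [hexp X (z + 1), Finset.mul_sum]
    apply Finset.sum_congr rfl
    intro k' _
    rw [mul_ite, mul_one, mul_zero]
  rw [hL, hR]
  apply Finset.sum_congr rfl
  intro k' _
  by_cases hk'j : k' = j
  · subst hk'j
    rw [Finset.sum_eq_zero, Finset.sum_eq_zero]
    · intro X _; simp
    · intro X _; simp
  · by_cases hk'k : k' = k
    · subst hk'k
      rw [Finset.sum_eq_zero, Finset.sum_eq_zero]
      · intro X hX
        simp only [hF, Finset.mem_filter, Finset.mem_univ, true_and] at hX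
        rw [if_neg]
        rintro ⟨-, h2⟩
        exact hcz1 (hX.2 ▸ h2)
      · intro X hX
        simp only [hF, Finset.mem_filter, Finset.mem_univ, true_and] at hX
        rw [if_neg]
        rintro ⟨-, h2⟩
        exact hcz (hX.2 ▸ h2)
    · -- main case: use the exchange lemma
      rw [← Finset.sum_filter, ← Finset.sum_filter, Finset.filter_filter,
        Finset.filter_filter]
      have hset1 : Finset.univ.filter
          (fun X : Fin n → Fin ℓ =>
            ((X j : ℕ) = z ∧ (X k : ℕ) = c) ∧ (k' ≠ j ∧ (X k' : ℕ) = z))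
          = Finset.univ.filter
          (fun X : Fin n → Fin ℓ => ((X j : ℕ) = z ∧ (X k : ℕ) = c) ∧ (X k' : ℕ) = z) := by
        ext X
        simp only [Finset.mem_filter]
        tauto
      have hset2 : Finset.univ.filter
          (fun X : Fin n → Fin ℓ =>
            ((X j : ℕ) = z ∧ (X k : ℕ) = c) ∧ (k' ≠ j ∧ (X k' : ℕ) = z + 1))
          = Finset.univ.filter
          (fun X : Fin n → Fin ℓ =>
            ((X j : ℕ) = z ∧ (X k : ℕ) = c) ∧ (X k' : ℕ) = z + 1) := by
        ext X
        simp only [Finset.mem_filter]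
        tauto
      rw [hset1, hset2]
      exact exch hΨ hjk hz k' hk'j hk'k

end Part4

section Part5

variable {twoS n ℓ : ℕ} {Ψ : (Fin n → Fin ℓ) → ℂ}

lemma gamma2_filter (Ψ : (Fin n → Fin ℓ) → ℂ) (j k : Fin n) (a c : ℕ) :
    gamma2 Ψ j k a c = ∑ X ∈ Finset.univ.filter
      (fun X : Fin n → Fin ℓ => (X j : ℕ) = a ∧ (X k : ℕ) = c), ‖Ψ X‖ ^ 2 :=
  (Finset.sum_filter _ _).symm

lemma gamma2_shift {j k : Fin n} (hjk : j ≠ k) {z c : ℕ} (hz : z + 1 < ℓ) :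
    gamma2 Ψ j k (z + 1) c = ∑ X ∈ Finset.univ.filter
      (fun X : Fin n → Fin ℓ => (X j : ℕ) = z ∧ (X k : ℕ) = c),
      ‖Ψ (Function.update X j (⟨z + 1, hz⟩ : Fin ℓ))‖ ^ 2 := by
  have hz0 : z < ℓ := by omega
  rw [gamma2_filter]
  apply Finset.sum_nbij' (fun Y => Function.update Y j (⟨z, hz0⟩ : Fin ℓ))
    (fun X => Function.update X j (⟨z + 1, hz⟩ : Fin ℓ))
  · intro Y hY
    simp only [Finset.mem_filter, Finset.mem_univ, true_and] at hY ⊢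
    rw [Function.update_self, Function.update_of_ne (Ne.symm hjk)]
    exact ⟨rfl, hY.2⟩
  · intro X hX
    simp only [Finset.mem_filter, Finset.mem_univ, true_and] at hX ⊢
    rw [Function.update_self, Function.update_of_ne (Ne.symm hjk)]
    exact ⟨rfl, hX.2⟩
  · intro Y hY
    simp only [Finset.mem_filter, Finset.mem_univ, true_and] at hY
    rw [Function.update_idem]
    have : (⟨z + 1, hz⟩ : Fin ℓ) = Y j := Fin.ext (by simp [hY.1])
    rw [this, Function.update_eq_self]
  · intro X hX
    simp only [Finset.mem_filter, Finset.mem_univ, true_and] at hX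
    rw [Function.update_idem]
    have : (⟨z, hz0⟩ : Fin ℓ) = X j := Fin.ext (by simp [hX.1])
    rw [this, Function.update_eq_self]
  · intro Y hY
    simp only [Finset.mem_filter, Finset.mem_univ, true_and] at hY
    rw [Function.update_idem]
    have : (⟨z + 1, hz⟩ : Fin ℓ) = Y j := Fin.ext (by simp [hY.1])
    rw [this, Function.update_eq_self]

lemma step_term_bound (hS : 1 ≤ twoS) {j : Fin n} {z : ℕ} (hz : z + 1 < ℓ)
    (X : Fin n → Fin ℓ) (hXj : (X j : ℕ) = z) :
    |‖Ψ (Function.update X j (⟨z + 1, hz⟩ : Fin ℓ))‖ ^ 2 * hopCoeff twoS X j z ^ 2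
      - ‖Ψ X‖ ^ 2 * hopCoeff twoS X j (z + 1) ^ 2| ≤ qfun twoS Ψ j X := by
  set Y := Function.update X j (⟨z + 1, hz⟩ : Fin ℓ) with hY
  have hupdS : updS j X = Y := updS_eq_of X hXj hz
  set p := hopCoeff twoS X j z with hp
  set q := hopCoeff twoS X j (z + 1) with hq
  have hp0 : 0 ≤ p := Real.sqrt_nonneg _
  have hq0 : 0 ≤ q := Real.sqrt_nonneg _
  have hp1 : p ≤ 1 := hopCoeff_le_one _ _ _ _
  have hq1 : q ≤ 1 := hopCoeff_le_one _ _ _ _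
  have ha0 : (0 : ℝ) ≤ ‖Ψ Y‖ := norm_nonneg _
  have hb0 : (0 : ℝ) ≤ ‖Ψ X‖ := norm_nonneg _
  have hsq : Real.sqrt (eterm twoS Ψ j X) = ‖Ψ Y * (p : ℂ) - Ψ X * (q : ℂ)‖ := by
    unfold eterm
    have h : (X j : ℕ) + 1 < ℓ := by omega
    rw [dif_pos h]
    have e1 : Function.update X j (⟨(X j : ℕ) + 1, h⟩ : Fin ℓ) = Y := by
      rw [hY]
      have : (⟨(X j : ℕ) + 1, h⟩ : Fin ℓ) = (⟨z + 1, hz⟩ : Fin ℓ) := by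
        apply Fin.ext
        simp only [hXj]
      rw [this]
    rw [e1, hXj]
    exact Real.sqrt_sq (norm_nonneg _)
  have key : ‖Ψ Y‖ ^ 2 * p ^ 2 - ‖Ψ X‖ ^ 2 * q ^ 2
      = (‖Ψ Y‖ * p - ‖Ψ X‖ * q) * (‖Ψ Y‖ * p + ‖Ψ X‖ * q) := by ring
  rw [key, abs_mul]
  have h2 : |‖Ψ Y‖ * p + ‖Ψ X‖ * q| = ‖Ψ Y‖ * p + ‖Ψ X‖ * q := by
    apply abs_of_nonneg
    positivity
  rw [h2]
  have h3 : |‖Ψ Y‖ * p - ‖Ψ X‖ * q| ≤ ‖Ψ Y * (p : ℂ) - Ψ X * (q : ℂ)‖ := by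
    have e2 : ‖Ψ Y * (p : ℂ)‖ = ‖Ψ Y‖ * p := by
      rw [norm_mul, Complex.norm_real, Real.norm_eq_abs, abs_of_nonneg hp0]
    have e3 : ‖Ψ X * (q : ℂ)‖ = ‖Ψ X‖ * q := by
      rw [norm_mul, Complex.norm_real, Real.norm_eq_abs, abs_of_nonneg hq0]
    calc |‖Ψ Y‖ * p - ‖Ψ X‖ * q| = |‖Ψ Y * (p : ℂ)‖ - ‖Ψ X * (q : ℂ)‖| := by rw [e2, e3]
      _ ≤ ‖Ψ Y * (p : ℂ) - Ψ X * (q : ℂ)‖ := abs_norm_sub_norm_le _ _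
  have h4 : ‖Ψ Y‖ * p + ‖Ψ X‖ * q ≤ ‖Ψ Y‖ + ‖Ψ X‖ := by
    nlinarith
  calc |‖Ψ Y‖ * p - ‖Ψ X‖ * q| * (‖Ψ Y‖ * p + ‖Ψ X‖ * q)
      ≤ ‖Ψ Y * (p : ℂ) - Ψ X * (q : ℂ)‖ * (‖Ψ Y‖ + ‖Ψ X‖) := by
        apply mul_le_mul h3 h4 (by positivity) (norm_nonneg _)
    _ = qfun twoS Ψ j X := by
        unfold qfun
        rw [hsq, hupdS]

lemma step_bound (hS : 1 ≤ twoS) (hΨ : SymmFun Ψ)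
    (hsupp : ∀ X : Fin n → Fin ℓ, (∃ x : ℕ, twoS < occ X x) → Ψ X = 0)
    {j k : Fin n} (hjk : j ≠ k) {z c : ℕ} (hz : z + 1 < ℓ) (hcz : c ≠ z)
    (hcz1 : c ≠ z + 1) :
    |gamma2 Ψ j k (z + 1) c - gamma2 Ψ j k z c| ≤ Bsum twoS Ψ j k z c := by
  classical
  set F := Finset.univ.filter
    (fun X : Fin n → Fin ℓ => (X j : ℕ) = z ∧ (X k : ℕ) = c) with hF
  have h1 : gamma2 Ψ j k (z + 1) c
      = ∑ X ∈ F, ‖Ψ (Function.update X j (⟨z + 1, hz⟩ : Fin ℓ))‖ ^ 2 :=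
    gamma2_shift hjk hz
  have h0 : gamma2 Ψ j k z c = ∑ X ∈ F, ‖Ψ X‖ ^ 2 := gamma2_filter Ψ j k z c
  have hmir := miracle hS hΨ hsupp hjk hz hcz hcz1
  have hdiff : gamma2 Ψ j k (z + 1) c - gamma2 Ψ j k z c
      = ∑ X ∈ F, (‖Ψ (Function.update X j (⟨z + 1, hz⟩ : Fin ℓ))‖ ^ 2
          * hopCoeff twoS X j z ^ 2 - ‖Ψ X‖ ^ 2 * hopCoeff twoS X j (z + 1) ^ 2) := by
    rw [h1, h0, ← Finset.sum_sub_distrib]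
    have expand : ∀ X ∈ F, ‖Ψ (Function.update X j (⟨z + 1, hz⟩ : Fin ℓ))‖ ^ 2 - ‖Ψ X‖ ^ 2
        = (‖Ψ (Function.update X j (⟨z + 1, hz⟩ : Fin ℓ))‖ ^ 2 * hopCoeff twoS X j z ^ 2
            - ‖Ψ X‖ ^ 2 * hopCoeff twoS X j (z + 1) ^ 2)
          + (‖Ψ (Function.update X j (⟨z + 1, hz⟩ : Fin ℓ))‖ ^ 2
              * (1 - hopCoeff twoS X j z ^ 2)
            - ‖Ψ X‖ ^ 2 * (1 - hopCoeff twoS X j (z + 1) ^ 2)) := by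
      intro X _
      ring
    rw [Finset.sum_congr rfl expand, Finset.sum_add_distrib]
    have hzero : ∑ X ∈ F, (‖Ψ (Function.update X j (⟨z + 1, hz⟩ : Fin ℓ))‖ ^ 2
        * (1 - hopCoeff twoS X j z ^ 2)
        - ‖Ψ X‖ ^ 2 * (1 - hopCoeff twoS X j (z + 1) ^ 2)) = 0 := by
      rw [Finset.sum_sub_distrib]
      rw [hF] at *
      rw [hmir, sub_self]
    rw [hzero, add_zero]
  rw [hdiff]
  calc |∑ X ∈ F, (‖Ψ (Function.update X j (⟨z + 1, hz⟩ : Fin ℓ))‖ ^ 2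
          * hopCoeff twoS X j z ^ 2 - ‖Ψ X‖ ^ 2 * hopCoeff twoS X j (z + 1) ^ 2)|
      ≤ ∑ X ∈ F, |‖Ψ (Function.update X j (⟨z + 1, hz⟩ : Fin ℓ))‖ ^ 2
          * hopCoeff twoS X j z ^ 2 - ‖Ψ X‖ ^ 2 * hopCoeff twoS X j (z + 1) ^ 2| :=
        Finset.abs_sum_le_sum_abs _ _
    _ ≤ ∑ X ∈ F, qfun twoS Ψ j X := by
        apply Finset.sum_le_sum
        intro X hX
        simp only [hF, Finset.mem_filter, Finset.mem_univ, true_and] at hX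
        exact step_term_bound hS hz X hX.1
    _ = Bsum twoS Ψ j k z c := by
        unfold Bsum
        rw [hF]
        exact Finset.sum_filter _ _

end Part5

section Part6

variable {twoS n ℓ : ℕ} {Ψ : (Fin n → Fin ℓ) → ℂ}

lemma abs_telescope (f : ℕ → ℝ) (a b : ℕ) (hab : a ≤ b) :
    |f b - f a| ≤ ∑ z ∈ Finset.Ico a b, |f (z + 1) - f z| := by
  induction b, hab using Nat.le_induction with
  | base => simp
  | succ b hab ih =>
      rw [Finset.sum_Ico_succ_top hab]
      have h1 : |f (b + 1) - f a| ≤ |f b - f a| + |f (b + 1) - f b| := by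
        have : f (b + 1) - f a = (f b - f a) + (f (b + 1) - f b) := by ring
        rw [this]
        exact abs_add_le _ _
      linarith

lemma collapse_single {v : ℝ} {b : ℕ} (L : ℕ) (hb : b < L) (P : Prop) [Decidable P] :
    ∑ c ∈ Finset.range L, (if P ∧ b = c then v else 0) = if P then v else 0 := by
  rw [Finset.sum_eq_single b]
  · exact if_congr (by tauto) rfl rfl
  · intro c _ hcb
    rw [if_neg]
    rintro ⟨-, h⟩
    exact hcb h.symm
  · intro hmem
    exact absurd (Finset.mem_range.2 hb) hmem

lemma collapse_double {v : ℝ} {a b : ℕ} (L : ℕ) (ha : a < L) (hb : b < L) :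
    ∑ x ∈ Finset.range L, ∑ y ∈ Finset.range L,
      (if a = y ∧ b = x then v else 0) = v := by
  have h1 : ∀ x, ∑ y ∈ Finset.range L, (if a = y ∧ b = x then v else 0)
      = if b = x then v else 0 := by
    intro x
    have := collapse_single (v := v) (b := a) L ha (b = x)
    rw [← this]
    apply Finset.sum_congr rfl
    intro y _
    exact if_congr (by tauto) rfl rfl
  rw [Finset.sum_congr rfl (fun x _ => h1 x)]
  rw [Finset.sum_eq_single b]
  · simp
  · intro c _ hcb
    rw [if_neg (fun h => hcb h.symm)]
  · intro hmem
    exact absurd (Finset.mem_range.2 hb) hmem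

end Part6

section Part7

def Usum (twoS : ℕ) {n ℓ : ℕ} (Ψ : (Fin n → Fin ℓ) → ℂ) (j k : Fin n) (x : ℕ) : ℝ :=
  ∑ z ∈ Finset.range (ℓ - 1), if x < z then Bsum twoS Ψ j k z x else 0

def Vsum (twoS : ℕ) {n ℓ : ℕ} (Ψ : (Fin n → Fin ℓ) → ℂ) (j k : Fin n) (x : ℕ) : ℝ :=
  ∑ z ∈ Finset.range (ℓ - 1), if z < x then Bsum twoS Ψ j k z (x + 1) else 0

def Qsum (twoS : ℕ) {n ℓ : ℕ} (Ψ : (Fin n → Fin ℓ) → ℂ) (j : Fin n) : ℝ :=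
  ∑ X : Fin n → Fin ℓ, if (X j : ℕ) + 1 < ℓ then qfun twoS Ψ j X else 0

variable {twoS n ℓ : ℕ} {Ψ : (Fin n → Fin ℓ) → ℂ}

lemma Usum_nonneg (j k : Fin n) (x : ℕ) : 0 ≤ Usum twoS Ψ j k x := by
  apply Finset.sum_nonneg
  intro z _
  split
  · exact Bsum_nonneg _ _ _ _ _ _
  · exact le_refl 0

lemma Vsum_nonneg (j k : Fin n) (x : ℕ) : 0 ≤ Vsum twoS Ψ j k x := by
  apply Finset.sum_nonneg
  intro z _
  split
  · exact Bsum_nonneg _ _ _ _ _ _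
  · exact le_refl 0

lemma compare_y (hS : 1 ≤ twoS) (hΨ : SymmFun Ψ)
    (hsupp : ∀ X : Fin n → Fin ℓ, (∃ x : ℕ, twoS < occ X x) → Ψ X = 0)
    {j k : Fin n} (hjk : j ≠ k) (x y : ℕ) (hx : x + 1 < ℓ) (hy : y < ℓ) :
    gamma2 Ψ j k (x + 1) x ≤
      (if x + 1 ≤ y then gamma2 Ψ j k y x else gamma2 Ψ j k y (x + 1))
        + (Usum twoS Ψ j k x + Vsum twoS Ψ j k x) := by
  have hU0 : 0 ≤ Usum twoS Ψ j k x := Usum_nonneg j k x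
  have hV0 : 0 ≤ Vsum twoS Ψ j k x := Vsum_nonneg j k x
  by_cases hxy : x + 1 ≤ y
  · rw [if_pos hxy]
    have htel := abs_telescope (fun w => gamma2 Ψ j k w x) (x + 1) y hxy
    have hstep : ∑ z ∈ Finset.Ico (x + 1) y,
        |gamma2 Ψ j k (z + 1) x - gamma2 Ψ j k z x| ≤ Usum twoS Ψ j k x := by
      have h1 : ∑ z ∈ Finset.Ico (x + 1) y,
          |gamma2 Ψ j k (z + 1) x - gamma2 Ψ j k z x|
          ≤ ∑ z ∈ Finset.Ico (x + 1) y, Bsum twoS Ψ j k z x := by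
        apply Finset.sum_le_sum
        intro z hz
        rw [Finset.mem_Ico] at hz
        have hz1 : z + 1 < ℓ := by omega
        exact step_bound hS hΨ hsupp hjk hz1 (by omega) (by omega)
      have h2 : ∑ z ∈ Finset.Ico (x + 1) y, Bsum twoS Ψ j k z x
          ≤ Usum twoS Ψ j k x := by
        unfold Usum
        rw [← Finset.sum_filter]
        apply Finset.sum_le_sum_of_subset_of_nonneg
        · intro z hz
          rw [Finset.mem_Ico] at hz
          simp only [Finset.mem_filter, Finset.mem_range]
          omega
        · intro z _ _
          exact Bsum_nonneg _ _ _ _ _ _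
      linarith
    have habs : gamma2 Ψ j k (x + 1) x - gamma2 Ψ j k y x
        ≤ |gamma2 Ψ j k y x - gamma2 Ψ j k (x + 1) x| := by
      rw [abs_sub_comm]
      exact le_abs_self _
    linarith
  · rw [if_neg hxy]
    have hyx : y ≤ x := by omega
    have hswap : gamma2 Ψ j k (x + 1) x = gamma2 Ψ j k x (x + 1) :=
      gamma2_swap_args hΨ hjk _ _
    have htel := abs_telescope (fun w => gamma2 Ψ j k w (x + 1)) y x hyx
    have hstep : ∑ z ∈ Finset.Ico y x,
        |gamma2 Ψ j k (z + 1) (x + 1) - gamma2 Ψ j k z (x + 1)|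
          ≤ Vsum twoS Ψ j k x := by
      have h1 : ∑ z ∈ Finset.Ico y x,
          |gamma2 Ψ j k (z + 1) (x + 1) - gamma2 Ψ j k z (x + 1)|
          ≤ ∑ z ∈ Finset.Ico y x, Bsum twoS Ψ j k z (x + 1) := by
        apply Finset.sum_le_sum
        intro z hz
        rw [Finset.mem_Ico] at hz
        have hz1 : z + 1 < ℓ := by omega
        exact step_bound hS hΨ hsupp hjk hz1 (by omega) (by omega)
      have h2 : ∑ z ∈ Finset.Ico y x, Bsum twoS Ψ j k z (x + 1)
          ≤ Vsum twoS Ψ j k x := by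
        unfold Vsum
        rw [← Finset.sum_filter]
        apply Finset.sum_le_sum_of_subset_of_nonneg
        · intro z hz
          rw [Finset.mem_Ico] at hz
          simp only [Finset.mem_filter, Finset.mem_range]
          omega
        · intro z _ _
          exact Bsum_nonneg _ _ _ _ _ _
      linarith
    have habs : gamma2 Ψ j k x (x + 1) - gamma2 Ψ j k y (x + 1)
        ≤ |gamma2 Ψ j k x (x + 1) - gamma2 Ψ j k y (x + 1)| := le_abs_self _
    linarith

lemma sum_over_y (hS : 1 ≤ twoS) (hΨ : SymmFun Ψ)
    (hsupp : ∀ X : Fin n → Fin ℓ, (∃ x : ℕ, twoS < occ X x) → Ψ X = 0)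
    {j k : Fin n} (hjk : j ≠ k) (x : ℕ) (hx : x + 1 < ℓ) :
    (ℓ : ℝ) * gamma2 Ψ j k (x + 1) x ≤
      (∑ y ∈ Finset.range ℓ,
        (if x + 1 ≤ y then gamma2 Ψ j k y x else gamma2 Ψ j k y (x + 1)))
        + (ℓ : ℝ) * (Usum twoS Ψ j k x + Vsum twoS Ψ j k x) := by
  have h := Finset.sum_le_sum (fun y hy =>
    compare_y hS hΨ hsupp hjk x y hx (Finset.mem_range.1 hy))
  rw [Finset.sum_const, Finset.card_range, nsmul_eq_mul] at h
  rw [Finset.sum_add_distrib, Finset.sum_const, Finset.card_range, nsmul_eq_mul] at h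
  linarith

end Part7

section Part8

variable {twoS n ℓ : ℕ} {Ψ : (Fin n → Fin ℓ) → ℂ}

lemma lambda_eq_one (hnorm : ∑ X : Fin n → Fin ℓ, ‖Ψ X‖ ^ 2 = 1) (j k : Fin n) :
    ∑ x ∈ Finset.range ℓ, ∑ y ∈ Finset.range ℓ, gamma2 Ψ j k y x = 1 := by
  unfold gamma2
  have h1 : ∀ x ∈ Finset.range ℓ, ∑ y ∈ Finset.range ℓ, ∑ X : Fin n → Fin ℓ,
      (if (X j : ℕ) = y ∧ (X k : ℕ) = x then ‖Ψ X‖ ^ 2 else 0)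
      = ∑ X : Fin n → Fin ℓ, ∑ y ∈ Finset.range ℓ,
      (if (X j : ℕ) = y ∧ (X k : ℕ) = x then ‖Ψ X‖ ^ 2 else 0) := by
    intro x _
    exact Finset.sum_comm
  rw [Finset.sum_congr rfl h1, Finset.sum_comm]
  rw [← hnorm]
  apply Finset.sum_congr rfl
  intro X _
  exact collapse_double ℓ (X j).isLt (X k).isLt

lemma omega_bound (hnorm : ∑ X : Fin n → Fin ℓ, ‖Ψ X‖ ^ 2 = 1) (j k : Fin n) :
    ∑ x ∈ Finset.range (ℓ - 1), ∑ y ∈ Finset.range ℓ,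
      (if x + 1 ≤ y then gamma2 Ψ j k y x else gamma2 Ψ j k y (x + 1)) ≤ 2 := by
  have hΛ := lambda_eq_one hnorm j k
  have hG0 : ∀ a c : ℕ, 0 ≤ gamma2 Ψ j k a c := fun a c => gamma2_nonneg Ψ j k a c
  have hsplit : ∑ x ∈ Finset.range (ℓ - 1), ∑ y ∈ Finset.range ℓ,
      (if x + 1 ≤ y then gamma2 Ψ j k y x else gamma2 Ψ j k y (x + 1))
      ≤ (∑ x ∈ Finset.range (ℓ - 1), ∑ y ∈ Finset.range ℓ, gamma2 Ψ j k y x)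
        + (∑ x ∈ Finset.range (ℓ - 1), ∑ y ∈ Finset.range ℓ, gamma2 Ψ j k y (x + 1)) := by
    rw [← Finset.sum_add_distrib]
    apply Finset.sum_le_sum
    intro x _
    rw [← Finset.sum_add_distrib]
    apply Finset.sum_le_sum
    intro y _
    split
    · have := hG0 y (x + 1); linarith
    · have := hG0 y x; linarith
  have hP1 : ∑ x ∈ Finset.range (ℓ - 1), ∑ y ∈ Finset.range ℓ, gamma2 Ψ j k y x ≤ 1 := by
    rw [← hΛ]
    apply Finset.sum_le_sum_of_subset_of_nonneg
    · apply Finset.range_subset_range.2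
      omega
    · intro x _ _
      exact Finset.sum_nonneg (fun y _ => hG0 y x)
  have hP2 : ∑ x ∈ Finset.range (ℓ - 1), ∑ y ∈ Finset.range ℓ, gamma2 Ψ j k y (x + 1)
      ≤ 1 := by
    have hre : ∑ x ∈ Finset.range (ℓ - 1), ∑ y ∈ Finset.range ℓ, gamma2 Ψ j k y (x + 1)
        = ∑ c ∈ Finset.Ico 1 ℓ, ∑ y ∈ Finset.range ℓ, gamma2 Ψ j k y c := by
      rw [Finset.sum_Ico_eq_sum_range]
      apply Finset.sum_congr rfl
      intro x _
      rw [Nat.add_comm 1 x]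
    rw [hre, ← hΛ]
    apply Finset.sum_le_sum_of_subset_of_nonneg
    · intro c hc
      rw [Finset.mem_Ico] at hc
      rw [Finset.mem_range]
      omega
    · intro x _ _
      exact Finset.sum_nonneg (fun y _ => hG0 y x)
  linarith

lemma collapse_eq' (L b : ℕ) (v : ℝ) :
    ∑ z ∈ Finset.range L, (if b = z then v else 0) = if b < L then v else 0 := by
  by_cases hb : b < L
  · rw [if_pos hb, Finset.sum_eq_single b]
    · rw [if_pos rfl]
    · intro c _ hcb
      exact if_neg (fun h => hcb h.symm)
    · intro hmem
      exact absurd (Finset.mem_range.2 hb) hmem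
  · rw [if_neg hb]
    apply Finset.sum_eq_zero
    intro z hz
    rw [Finset.mem_range] at hz
    exact if_neg (by omega)

lemma Bsum_row (j k : Fin n) (z : ℕ) :
    ∑ c ∈ Finset.range ℓ, Bsum twoS Ψ j k z c
      = ∑ X : Fin n → Fin ℓ, (if (X j : ℕ) = z then qfun twoS Ψ j X else 0) := by
  unfold Bsum
  rw [Finset.sum_comm]
  apply Finset.sum_congr rfl
  intro X _
  exact collapse_single ℓ (X k).isLt _

lemma W_eq_Qsum (j k : Fin n) :
    ∑ z ∈ Finset.range (ℓ - 1), ∑ c ∈ Finset.range ℓ, Bsum twoS Ψ j k z c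
      = Qsum twoS Ψ j := by
  rw [Finset.sum_congr rfl (fun z _ => Bsum_row j k z), Finset.sum_comm]
  unfold Qsum
  apply Finset.sum_congr rfl
  intro X _
  rw [collapse_eq' (ℓ - 1) (X j : ℕ) (qfun twoS Ψ j X)]
  exact if_congr (by omega) rfl rfl

lemma energy_side (j k : Fin n) :
    ∑ x ∈ Finset.range (ℓ - 1), (Usum twoS Ψ j k x + Vsum twoS Ψ j k x)
      ≤ 2 * Qsum twoS Ψ j := by
  have hB0 : ∀ z c : ℕ, 0 ≤ Bsum twoS Ψ j k z c := fun z c => Bsum_nonneg _ _ _ _ _ _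
  have hW := W_eq_Qsum (Ψ := Ψ) (twoS := twoS) j k
  have hU : ∑ x ∈ Finset.range (ℓ - 1), Usum twoS Ψ j k x
      ≤ ∑ z ∈ Finset.range (ℓ - 1), ∑ c ∈ Finset.range ℓ, Bsum twoS Ψ j k z c := by
    unfold Usum
    rw [Finset.sum_comm]
    apply Finset.sum_le_sum
    intro z _
    calc ∑ x ∈ Finset.range (ℓ - 1), (if x < z then Bsum twoS Ψ j k z x else 0)
        ≤ ∑ x ∈ Finset.range (ℓ - 1), Bsum twoS Ψ j k z x := by
          apply Finset.sum_le_sum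
          intro x _
          split
          · exact le_refl _
          · exact hB0 z x
      _ ≤ ∑ c ∈ Finset.range ℓ, Bsum twoS Ψ j k z c := by
          apply Finset.sum_le_sum_of_subset_of_nonneg
          · apply Finset.range_subset_range.2; omega
          · intro c _ _; exact hB0 z c
  have hV : ∑ x ∈ Finset.range (ℓ - 1), Vsum twoS Ψ j k x
      ≤ ∑ z ∈ Finset.range (ℓ - 1), ∑ c ∈ Finset.range ℓ, Bsum twoS Ψ j k z c := by
    unfold Vsum
    rw [Finset.sum_comm]
    apply Finset.sum_le_sum
    intro z _
    calc ∑ x ∈ Finset.range (ℓ - 1), (if z < x then Bsum twoS Ψ j k z (x + 1) else 0)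
        ≤ ∑ x ∈ Finset.range (ℓ - 1), Bsum twoS Ψ j k z (x + 1) := by
          apply Finset.sum_le_sum
          intro x _
          split
          · exact le_refl _
          · exact hB0 z (x + 1)
      _ = ∑ c ∈ Finset.Ico 1 ℓ, Bsum twoS Ψ j k z c := by
          rw [Finset.sum_Ico_eq_sum_range]
          apply Finset.sum_congr rfl
          intro x _
          rw [Nat.add_comm 1 x]
      _ ≤ ∑ c ∈ Finset.range ℓ, Bsum twoS Ψ j k z c := by
          apply Finset.sum_le_sum_of_subset_of_nonneg
          · intro c hc
            rw [Finset.mem_Ico] at hc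
            rw [Finset.mem_range]
            omega
          · intro c _ _; exact hB0 z c
  rw [Finset.sum_add_distrib]
  linarith

end Part8

section Part9

variable {twoS n ℓ : ℕ} {Ψ : (Fin n → Fin ℓ) → ℂ}

lemma eterm_of_not {j : Fin n} {X : Fin n → Fin ℓ} (h : ¬((X j : ℕ) + 1 < ℓ)) :
    eterm twoS Ψ j X = 0 := dif_neg h

lemma Qsum_nonneg (j : Fin n) : 0 ≤ Qsum twoS Ψ j := by
  unfold Qsum
  apply Finset.sum_nonneg
  intro X _
  split
  · exact qfun_nonneg _ _ _ _
  · exact le_refl 0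

lemma cs_bound (hnorm : ∑ X : Fin n → Fin ℓ, ‖Ψ X‖ ^ 2 = 1) (j : Fin n) :
    Qsum twoS Ψ j ≤ 2 * Real.sqrt (∑ X : Fin n → Fin ℓ, eterm twoS Ψ j X) := by
  classical
  set f : (Fin n → Fin ℓ) → ℝ := fun X =>
    if (X j : ℕ) + 1 < ℓ then Real.sqrt (eterm twoS Ψ j X) else 0 with hf
  set g : (Fin n → Fin ℓ) → ℝ := fun X =>
    if (X j : ℕ) + 1 < ℓ then ‖Ψ (updS j X)‖ + ‖Ψ X‖ else 0 with hg
  have hfg : Qsum twoS Ψ j = ∑ X : Fin n → Fin ℓ, f X * g X := by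
    unfold Qsum
    apply Finset.sum_congr rfl
    intro X _
    rw [hf, hg]
    by_cases h : (X j : ℕ) + 1 < ℓ
    · simp only [if_pos h]
      rfl
    · simp only [if_neg h, mul_zero]
  have hf2 : ∑ X : Fin n → Fin ℓ, f X ^ 2 = ∑ X : Fin n → Fin ℓ, eterm twoS Ψ j X := by
    apply Finset.sum_congr rfl
    intro X _
    simp only [hf]
    by_cases h : (X j : ℕ) + 1 < ℓ
    · rw [if_pos h, Real.sq_sqrt (eterm_nonneg _ _ _ _)]
    · rw [if_neg h, eterm_of_not h]
      norm_num
  have hT2 : ∑ X : Fin n → Fin ℓ, (if (X j : ℕ) + 1 < ℓ then ‖Ψ X‖ ^ 2 else 0) ≤ 1 := by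
    rw [← hnorm]
    apply Finset.sum_le_sum
    intro X _
    split
    · exact le_refl _
    · positivity
  have hT1 : ∑ X : Fin n → Fin ℓ, (if (X j : ℕ) + 1 < ℓ then ‖Ψ (updS j X)‖ ^ 2 else 0)
      ≤ 1 := by
    rw [← Finset.sum_filter]
    set S := Finset.univ.filter (fun X : Fin n → Fin ℓ => (X j : ℕ) + 1 < ℓ) with hS
    have hinj : ∀ X₁ ∈ S, ∀ X₂ ∈ S, updS j X₁ = updS j X₂ → X₁ = X₂ := by
      intro X₁ h₁ X₂ h₂ heq
      simp only [hS, Finset.mem_filter, Finset.mem_univ, true_and] at h₁ h₂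
      rw [updS, dif_pos h₁, updS, dif_pos h₂] at heq
      funext i
      rcases eq_or_ne i j with rfl | hij
      · have := congrFun heq i
        rw [Function.update_self, Function.update_self] at this
        have hval : (X₁ i : ℕ) + 1 = (X₂ i : ℕ) + 1 := by
          have := congrArg (fun t : Fin ℓ => (t : ℕ)) this
          simpa using this
        exact Fin.ext (by omega)
      · have := congrFun heq i
        rw [Function.update_of_ne hij, Function.update_of_ne hij] at this
        exact this
    have himg : ∑ X ∈ S, ‖Ψ (updS j X)‖ ^ 2
        = ∑ Y ∈ S.image (updS j), ‖Ψ Y‖ ^ 2 := by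
      rw [Finset.sum_image hinj]
    rw [himg, ← hnorm]
    apply Finset.sum_le_sum_of_subset_of_nonneg
    · exact Finset.subset_univ _
    · intro Y _ _
      positivity
  have hg2 : ∑ X : Fin n → Fin ℓ, g X ^ 2 ≤ 4 := by
    have hpt : ∀ X : Fin n → Fin ℓ, g X ^ 2 ≤
        2 * (if (X j : ℕ) + 1 < ℓ then ‖Ψ (updS j X)‖ ^ 2 else 0)
          + 2 * (if (X j : ℕ) + 1 < ℓ then ‖Ψ X‖ ^ 2 else 0) := by
      intro X
      simp only [hg]
      by_cases h : (X j : ℕ) + 1 < ℓ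
      · simp only [if_pos h]
        nlinarith [sq_nonneg (‖Ψ (updS j X)‖ - ‖Ψ X‖)]
      · simp only [if_neg h]
        norm_num
    calc ∑ X : Fin n → Fin ℓ, g X ^ 2
        ≤ ∑ X : Fin n → Fin ℓ,
          (2 * (if (X j : ℕ) + 1 < ℓ then ‖Ψ (updS j X)‖ ^ 2 else 0)
            + 2 * (if (X j : ℕ) + 1 < ℓ then ‖Ψ X‖ ^ 2 else 0)) :=
          Finset.sum_le_sum (fun X _ => hpt X)
      _ ≤ 4 := by
          rw [Finset.sum_add_distrib, ← Finset.mul_sum, ← Finset.mul_sum]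
          linarith
  have hcs := Finset.sum_mul_sq_le_sq_mul_sq Finset.univ f g
  have hQ0 : 0 ≤ Qsum twoS Ψ j := Qsum_nonneg j
  have hsum_e_nonneg : 0 ≤ ∑ X : Fin n → Fin ℓ, eterm twoS Ψ j X :=
    Finset.sum_nonneg (fun X _ => eterm_nonneg _ _ _ _)
  calc Qsum twoS Ψ j = Real.sqrt ((Qsum twoS Ψ j) ^ 2) := (Real.sqrt_sq hQ0).symm
    _ ≤ Real.sqrt ((∑ X : Fin n → Fin ℓ, eterm twoS Ψ j X) * 4) := by
        apply Real.sqrt_le_sqrt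
        rw [hfg]
        calc (∑ X : Fin n → Fin ℓ, f X * g X) ^ 2
            ≤ (∑ X : Fin n → Fin ℓ, f X ^ 2) * ∑ X : Fin n → Fin ℓ, g X ^ 2 := hcs
          _ ≤ (∑ X : Fin n → Fin ℓ, eterm twoS Ψ j X) * 4 := by
              rw [hf2]
              apply mul_le_mul_of_nonneg_left hg2 hsum_e_nonneg
    _ = 2 * Real.sqrt (∑ X : Fin n → Fin ℓ, eterm twoS Ψ j X) := by
        rw [Real.sqrt_mul hsum_e_nonneg]
        rw [show (4 : ℝ) = 2 ^ 2 by norm_num, Real.sqrt_sq (by norm_num : (0:ℝ) ≤ 2)]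
        ring

lemma energy_id (hΨ : SymmFun Ψ) (j : Fin n) :
    Eform twoS Ψ = Sval twoS * ((n : ℝ) * ∑ X : Fin n → Fin ℓ, eterm twoS Ψ j X) := by
  rw [Eform_eq_sum_eterm]
  congr 1
  rw [Finset.sum_congr rfl (fun j' _ => sum_eterm_eq twoS hΨ j j')]
  rw [Finset.sum_const, Finset.card_univ, Fintype.card_fin, nsmul_eq_mul]

end Part9

/-- Bound on the nearest-neighbor two-particle density:
`∑_{x=1}^{ℓ−1} ρ(x+1,x) ≤ (4/ℓ) n(n−1) + 4(n−1)√(n/S) E_{ℓ,n}(Ψ)^{1/2}`. -/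
theorem two_particle_density_offdiagonal_bound (twoS : ℕ) (hS : 1 ≤ twoS)
    {n ℓ : ℕ} (hn : 1 ≤ n) (hℓ : 1 ≤ ℓ)
    (Ψ : (Fin n → Fin ℓ) → ℂ) (hΨ : SymmFun Ψ)
    (hnorm : ∑ X : Fin n → Fin ℓ, ‖Ψ X‖ ^ 2 = 1)
    (hsupp : ∀ X : Fin n → Fin ℓ, (∃ x : ℕ, twoS < occ X x) → Ψ X = 0) :
    ∑ x ∈ Finset.range (ℓ - 1), rho2 Ψ (x + 1) x ≤
      4 / (ℓ : ℝ) * ((n : ℝ) * ((n : ℝ) - 1)) +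
        4 * ((n : ℝ) - 1) * Real.sqrt ((n : ℝ) / Sval twoS) *
          Real.sqrt (Eform twoS Ψ) := by
  classical
  by_cases hn1 : n = 1
  · subst hn1
    have hLHS : ∑ x ∈ Finset.range (ℓ - 1), rho2 Ψ (x + 1) x = 0 := by
      apply Finset.sum_eq_zero
      intro x _
      unfold rho2
      apply Finset.sum_eq_zero
      intro X _
      have hcard : (Finset.univ.filter fun p : Fin 1 × Fin 1 =>
          p.1 ≠ p.2 ∧ (X p.1 : ℕ) = x + 1 ∧ (X p.2 : ℕ) = x) = ∅ := by
        apply Finset.eq_empty_of_forall_notMem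
        intro p hp
        simp only [Finset.mem_filter, Finset.mem_univ, true_and] at hp
        exact hp.1 (Subsingleton.elim _ _)
      rw [hcard]
      norm_num
    rw [hLHS]
    norm_num
  · have hn2 : 2 ≤ n := by omega
    have h0n : 0 < n := by omega
    have h1n : 1 < n := by omega
    set j : Fin n := ⟨0, h0n⟩ with hj
    set k : Fin n := ⟨1, h1n⟩ with hk
    have hjk : j ≠ k := by
      intro h
      have := congrArg Fin.val h
      simp [hj, hk] at this
    set Esum := ∑ X : Fin n → Fin ℓ, eterm twoS Ψ j X with hEsum
    have hEsum0 : 0 ≤ Esum :=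
      Finset.sum_nonneg fun X _ => eterm_nonneg _ _ _ _
    set D := ∑ x ∈ Finset.range (ℓ - 1), gamma2 Ψ j k (x + 1) x with hD
    have hℓ0 : (0 : ℝ) < (ℓ : ℝ) := by
      exact_mod_cast hℓ
    -- the averaged comparison, summed over x
    have hmain : ∀ x ∈ Finset.range (ℓ - 1),
        (ℓ : ℝ) * gamma2 Ψ j k (x + 1) x ≤
          (∑ y ∈ Finset.range ℓ,
            (if x + 1 ≤ y then gamma2 Ψ j k y x else gamma2 Ψ j k y (x + 1)))
            + (ℓ : ℝ) * (Usum twoS Ψ j k x + Vsum twoS Ψ j k x) := by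
      intro x hx
      rw [Finset.mem_range] at hx
      exact sum_over_y hS hΨ hsupp hjk x (by omega)
    have hsum := Finset.sum_le_sum hmain
    rw [← Finset.mul_sum, ← hD] at hsum
    rw [Finset.sum_add_distrib, ← Finset.mul_sum] at hsum
    have hΩ := omega_bound hnorm j k
    have hE2 := energy_side (twoS := twoS) (Ψ := Ψ) j k
    have hQ := cs_bound (twoS := twoS) hnorm j
    have hQ0 := Qsum_nonneg (twoS := twoS) (Ψ := Ψ) j
    rw [← hEsum] at hQ
    -- D ≤ 2/ℓ + 4 √Esum
    have hDb : D ≤ 2 / (ℓ : ℝ) + 4 * Real.sqrt Esum := by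
      have hsum' : (ℓ : ℝ) * D ≤ 2 + (ℓ : ℝ) * (2 * Qsum twoS Ψ j) := by
        have h2 : (ℓ : ℝ) * (∑ x ∈ Finset.range (ℓ - 1),
            (Usum twoS Ψ j k x + Vsum twoS Ψ j k x))
            ≤ (ℓ : ℝ) * (2 * Qsum twoS Ψ j) :=
          mul_le_mul_of_nonneg_left hE2 (le_of_lt hℓ0)
        linarith
      have e1 : (ℓ : ℝ) * (2 / (ℓ : ℝ) + 4 * Real.sqrt Esum)
          = 2 + (ℓ : ℝ) * (4 * Real.sqrt Esum) := by
        field_simp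
      apply le_of_mul_le_mul_left ?_ hℓ0
      rw [e1]
      have h3 : (ℓ : ℝ) * (2 * Qsum twoS Ψ j) ≤ (ℓ : ℝ) * (4 * Real.sqrt Esum) := by
        apply mul_le_mul_of_nonneg_left ?_ (le_of_lt hℓ0)
        linarith
      linarith
    -- express the density sum via D
    have hρ : ∑ x ∈ Finset.range (ℓ - 1), rho2 Ψ (x + 1) x
        = ((n : ℝ) * n - n) * D := by
      rw [hD, Finset.mul_sum]
      apply Finset.sum_congr rfl
      intro x _
      exact rho2_eq_gamma2 hΨ hjk _ _
    have hE := energy_id (twoS := twoS) hΨ j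
    rw [← hEsum] at hE
    have hS0 : (0 : ℝ) < Sval twoS := by
      unfold Sval
      have : (1 : ℝ) ≤ (twoS : ℝ) := by exact_mod_cast hS
      linarith
    have hsqrtE : Real.sqrt ((n : ℝ) / Sval twoS) * Real.sqrt (Eform twoS Ψ)
        = (n : ℝ) * Real.sqrt Esum := by
      rw [hE, ← Real.sqrt_mul (by positivity : (0 : ℝ) ≤ (n : ℝ) / Sval twoS)]
      have harg : (n : ℝ) / Sval twoS * (Sval twoS * ((n : ℝ) * Esum))
          = (n : ℝ) ^ 2 * Esum := by
        field_simp
      rw [harg, Real.sqrt_mul (sq_nonneg _),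
        Real.sqrt_sq (by positivity : (0 : ℝ) ≤ (n : ℝ))]
    have hn0 : (0 : ℝ) ≤ (n : ℝ) * n - n := by
      have h2 : (2 : ℝ) ≤ (n : ℝ) := by exact_mod_cast hn2
      nlinarith
    rw [hρ]
    have hfin : 4 * ((n : ℝ) - 1) * Real.sqrt ((n : ℝ) / Sval twoS)
        * Real.sqrt (Eform twoS Ψ) = 4 * ((n : ℝ) * n - n) * Real.sqrt Esum := by
      rw [mul_assoc (4 * ((n : ℝ) - 1)), hsqrtE]
      ring
    calc ((n : ℝ) * n - n) * D
        ≤ ((n : ℝ) * n - n) * (2 / (ℓ : ℝ) + 4 * Real.sqrt Esum) :=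
          mul_le_mul_of_nonneg_left hDb hn0
      _ ≤ 4 / (ℓ : ℝ) * ((n : ℝ) * ((n : ℝ) - 1)) +
          4 * ((n : ℝ) - 1) * Real.sqrt ((n : ℝ) / Sval twoS)
            * Real.sqrt (Eform twoS Ψ) := by
          rw [hfin]
          have hexp : ((n : ℝ) * n - n) * (2 / (ℓ : ℝ) + 4 * Real.sqrt Esum)
              = 2 * ((n : ℝ) * n - n) / (ℓ : ℝ)
                + 4 * ((n : ℝ) * n - n) * Real.sqrt Esum := by
            ring
          have hfirst : 4 / (ℓ : ℝ) * ((n : ℝ) * ((n : ℝ) - 1))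
              = 4 * ((n : ℝ) * n - n) / (ℓ : ℝ) := by
            ring
          rw [hexp, hfirst]
          have hpos : 0 ≤ 2 * ((n : ℝ) * n - n) / (ℓ : ℝ) := by positivity
          have : 2 * ((n : ℝ) * n - n) / (ℓ : ℝ)
              ≤ 4 * ((n : ℝ) * n - n) / (ℓ : ℝ) := by
            gcongr
            · linarith
          linarith

end
end
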